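/- arXiv:1509.00447 — 6 statements merged into one kernel-verified Lean document; each statement's English description precedes it below -/
import Mathlib

section
/- The set of nonempty compact star-shaped subsets of ℝ^m is closed in the space of nonempty compact subsets of ℝ^m equipped with the Hausdorff metric. That is, if K_n are nonempty compact star-shaped sets converging in Hausdorff distance to a nonempty compact set K, then K is star-shaped. -/
open Metric Set MeasureTheory Filter

noncomputable section

/-- `Em m` is the Euclidean space ℝ^m. -/
abbrev Em (m : ℕ) := EuclideanSpace ℝ (Fin m)

/-- A set is star-shaped if it contains a point `x` such that the segment from `x`
to any point of the set lies in the set. -/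
def StarShaped {m : ℕ} (K : Set (Em m)) : Prop :=
  ∃ x ∈ K, ∀ y ∈ K, segment ℝ x y ⊆ K

/-- The kernel of a set: all points seeing the whole set. -/
def kern {m : ℕ} (K : Set (Em m)) : Set (Em m) :=
  {x | x ∈ K ∧ ∀ y ∈ K, segment ℝ x y ⊆ K}

/-- Kuratowski upper limit of a sequence of sets. -/
def KLimsup {m : ℕ} (C : ℕ → Set (Em m)) : Set (Em m) :=
  ⋂ n : ℕ, closure (⋃ k : ℕ, ⋃ _ : n ≤ k, C k)

/-- Kuratowski lower limit of a sequence of sets. -/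
def KLiminf {m : ℕ} (C : ℕ → Set (Em m)) : Set (Em m) :=
  {x | ∃ f : ℕ → Em m, (∀ n, f n ∈ C n) ∧ Tendsto f atTop (nhds x)}

/-- The α-cut of a fuzzy set `u`, for α > 0. -/
def acut {m : ℕ} (u : Em m → ℝ) (a : ℝ) : Set (Em m) := {x | a ≤ u x}

/-- The support (0-cut) of a fuzzy set. -/
def fsupp {m : ℕ} (u : Em m → ℝ) : Set (Em m) := closure {x | 0 < u x}

/-- Membership in `F_B(ℝ^m)^p`: normal, upper semi-continuous fuzzy sets with
compact α-cuts for α ∈ (0,1] and α ↦ H([u]_α, {0})^p integrable on (0,1]. -/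
structure IsFuzzyBp {m : ℕ} (p : ℝ) (u : Em m → ℝ) : Prop where
  mem01 : ∀ x, u x ∈ Icc (0:ℝ) 1
  normal : ∃ x, u x = 1
  usc : UpperSemicontinuous u
  compactCuts : ∀ a ∈ Ioc (0:ℝ) 1, IsCompact (acut u a)
  lp : IntegrableOn (fun a => hausdorffDist (acut u a) ({0} : Set (Em m)) ^ p)
        (Ioc (0:ℝ) 1)

/-- Membership in `F_B(ℝ^m)`: normal, upper semi-continuous fuzzy sets with
bounded (hence compact closed) support. -/
structure IsFuzzyB {m : ℕ} (u : Em m → ℝ) : Prop where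
  mem01 : ∀ x, u x ∈ Icc (0:ℝ) 1
  normal : ∃ x, u x = 1
  usc : UpperSemicontinuous u
  bddSupp : Bornology.IsBounded {x | 0 < u x}

/-- The `d_p` metric on fuzzy sets. -/
def dp {m : ℕ} (p : ℝ) (u v : Em m → ℝ) : ℝ :=
  (∫ a in Ioc (0:ℝ) 1, hausdorffDist (acut u a) (acut v a) ^ p) ^ (1/p)

/-- `d_p` distance to the crisp origin `0̂`. -/
def dpOrigin {m : ℕ} (p : ℝ) (u : Em m → ℝ) : ℝ :=
  (∫ a in Ioc (0:ℝ) 1, hausdorffDist (acut u a) ({0} : Set (Em m)) ^ p) ^ (1/p)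

/-- Uniformly p-mean bounded family. -/
def UPMB {m : ℕ} (p : ℝ) (U : Set (Em m → ℝ)) : Prop :=
  ∃ M : ℝ, ∀ u ∈ U, dpOrigin p u ≤ M

/-- p-mean equi-left-continuous family. -/
def PMELC {m : ℕ} (p : ℝ) (U : Set (Em m → ℝ)) : Prop :=
  ∀ ε > (0:ℝ), ∃ δ > (0:ℝ), ∀ h : ℝ, 0 ≤ h → h < δ → ∀ u ∈ U,
    (∫ a in Ioc h 1, hausdorffDist (acut u a) (acut u (a - h)) ^ p) ^ (1/p) < ε

/-- Truncation `u^{(a)}` of a fuzzy set at level `a`. -/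
def ftrunc {m : ℕ} (u : Em m → ℝ) (a : ℝ) : Em m → ℝ :=
  fun x => if a ≤ u x then u x else 0

/-- The kernel of a fuzzy set: intersection of the kernels of its cuts. -/
def fker {m : ℕ} (u : Em m → ℝ) : Set (Em m) :=
  ⋂ a ∈ Ioc (0:ℝ) 1, kern (acut u a)

/-- The full cut-family of a fuzzy set, with the 0-cut being the support. -/
def cutF {m : ℕ} (u : Em m → ℝ) (a : ℝ) : Set (Em m) :=
  if a = 0 then fsupp u else acut u a

/-- Conditions (i)–(iv) of the representation theorem for `F_B(ℝ^m)^p`. -/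
def GoodFamily {m : ℕ} (p : ℝ) (v : ℝ → Set (Em m)) : Prop :=
  (∀ l ∈ Ioc (0:ℝ) 1, (v l).Nonempty ∧ IsCompact (v l)) ∧
  (∀ l ∈ Ioc (0:ℝ) 1, v l = ⋂ g ∈ Ico (0:ℝ) l, v g) ∧
  (v 0 = closure (⋃ g ∈ Ioc (0:ℝ) 1, v g)) ∧
  IntegrableOn (fun a => hausdorffDist (v a) ({0} : Set (Em m)) ^ p) (Ioc (0:ℝ) 1)

/-! If `x n` is a star centre of `K n`, a subsequence of `x n` converges to some `x₀ ∈ L`.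
Given `y ∈ L`, pick `q n ∈ K n` converging to `y`; the points `a • x n + b • q n` of `K n`
converge to `a • x₀ + b • y`, which therefore lies in `L`. -/

open Topology

section HausdorffConvergence

variable {ι E : Type*} [PseudoMetricSpace E] {l : Filter ι} {K : ι → Set E} {L : Set E}

theorem tendsto_infDist_of_tendsto_hausdorffDist
    (hfin : ∀ i, hausdorffEDist (K i) L ≠ ⊤)
    (h : Tendsto (fun i => hausdorffDist (K i) L) l (𝓝 0))
    {z : ι → E} (hz : ∀ i, z i ∈ K i) :
    Tendsto (fun i => infDist (z i) L) l (𝓝 0) :=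
  squeeze_zero (fun _ => infDist_nonneg)
    (fun i => infDist_le_hausdorffDist_of_mem (hz i) (hfin i)) h

theorem mem_of_tendsto_of_tendsto_hausdorffDist [l.NeBot] (hL : IsClosed L)
    (hfin : ∀ i, hausdorffEDist (K i) L ≠ ⊤)
    (h : Tendsto (fun i => hausdorffDist (K i) L) l (𝓝 0))
    {z : ι → E} {z₀ : E} (hz : ∀ i, z i ∈ K i) (hlim : Tendsto z l (𝓝 z₀)) :
    z₀ ∈ L := by
  obtain ⟨i⟩ : Nonempty ι := l.nonempty_of_neBot
  have hLne : L.Nonempty := nonempty_of_hausdorffEDist_ne_top ⟨z i, hz i⟩ (hfin i)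
  have hdist : Tendsto (fun i => infDist (z i) L) l (𝓝 (infDist z₀ L)) :=
    ((continuous_infDist_pt L).tendsto z₀).comp hlim
  exact (hL.mem_iff_infDist_zero hLne).2 <|
    tendsto_nhds_unique hdist (tendsto_infDist_of_tendsto_hausdorffDist hfin h hz)

theorem exists_tendsto_of_tendsto_hausdorffDist
    (hKne : ∀ i, (K i).Nonempty) (hKc : ∀ i, IsCompact (K i))
    (hfin : ∀ i, hausdorffEDist (K i) L ≠ ⊤)
    (h : Tendsto (fun i => hausdorffDist (K i) L) l (𝓝 0)) {y : E} (hy : y ∈ L) :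
    ∃ q : ι → E, (∀ i, q i ∈ K i) ∧ Tendsto q l (𝓝 y) := by
  choose q hqK hq using fun i => (hKc i).exists_infDist_eq_dist (hKne i) y
  refine ⟨q, hqK, tendsto_iff_dist_tendsto_zero.2 <| squeeze_zero (fun _ => dist_nonneg)
    (fun i => ?_) h⟩
  rw [dist_comm, ← hq, hausdorffDist_comm]
  exact infDist_le_hausdorffDist_of_mem hy (hausdorffEDist_comm.trans_ne (hfin i))

theorem exists_subseq_tendsto_of_tendsto_hausdorffDist {K : ℕ → Set E}
    (hLne : L.Nonempty) (hLc : IsCompact L)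
    (hfin : ∀ n, hausdorffEDist (K n) L ≠ ⊤)
    (h : Tendsto (fun n => hausdorffDist (K n) L) atTop (𝓝 0))
    {x : ℕ → E} (hx : ∀ n, x n ∈ K n) :
    ∃ x₀ ∈ L, ∃ φ : ℕ → ℕ, StrictMono φ ∧ Tendsto (x ∘ φ) atTop (𝓝 x₀) := by
  -- nearest points of `L`, which have a convergent subsequence since `L` is compact
  choose p hpL hp using fun n => hLc.exists_infDist_eq_dist hLne (x n)
  obtain ⟨x₀, hx₀, φ, hφ, hpφ⟩ := hLc.tendsto_subseq hpL
  have hxp : Tendsto (fun n => dist (x n) (p n)) atTop (𝓝 0) := by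
    simpa only [hp] using tendsto_infDist_of_tendsto_hausdorffDist hfin h hx
  refine ⟨x₀, hx₀, φ, hφ, tendsto_iff_dist_tendsto_zero.2 <| squeeze_zero
    (fun _ => dist_nonneg) (fun n => dist_triangle _ (p (φ n)) _) ?_⟩
  simpa using (hxp.comp hφ.tendsto_atTop).add (tendsto_iff_dist_tendsto_zero.1 hpφ)

end HausdorffConvergence

theorem StarConvex.of_tendsto_hausdorffDist {ι E : Type*} [SeminormedAddCommGroup E]
    [NormedSpace ℝ E] {l : Filter ι} [l.NeBot] {K : ι → Set E} {L : Set E}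
    {x : ι → E} {x₀ : E} (hstar : ∀ i, StarConvex ℝ (x i) (K i))
    (hx : Tendsto x l (𝓝 x₀))
    (hKne : ∀ i, (K i).Nonempty) (hKc : ∀ i, IsCompact (K i)) (hL : IsClosed L)
    (hfin : ∀ i, hausdorffEDist (K i) L ≠ ⊤)
    (h : Tendsto (fun i => hausdorffDist (K i) L) l (𝓝 0)) :
    StarConvex ℝ x₀ L := by
  intro y hy a b ha hb hab
  obtain ⟨q, hqK, hq⟩ := exists_tendsto_of_tendsto_hausdorffDist hKne hKc hfin h hy
  exact mem_of_tendsto_of_tendsto_hausdorffDist hL hfin h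
    (fun i => hstar i (hqK i) ha hb hab) ((hx.const_smul a).add (hq.const_smul b))

theorem starShaped_iff_exists_starConvex {m : ℕ} {K : Set (Em m)} :
    StarShaped K ↔ ∃ x ∈ K, StarConvex ℝ x K := by
  simp only [StarShaped, starConvex_iff_segment_subset]

/-- The nonempty compact star-shaped sets are closed under
Hausdorff convergence among nonempty compact sets. -/
theorem starShaped_closed_under_hausdorff {m : ℕ}
    (K : ℕ → Set (Em m)) (L : Set (Em m))
    (hKne : ∀ n, (K n).Nonempty) (hKc : ∀ n, IsCompact (K n))
    (hKs : ∀ n, StarShaped (K n))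
    (hLne : L.Nonempty) (hLc : IsCompact L)
    (h : Tendsto (fun n => hausdorffDist (K n) L) atTop (nhds 0)) :
    StarShaped L := by
  choose x hxK hstar using fun n => starShaped_iff_exists_starConvex.1 (hKs n)
  have hfin : ∀ n, hausdorffEDist (K n) L ≠ ⊤ := fun n =>
    hausdorffEDist_ne_top_of_nonempty_of_bounded (hKne n) hLne (hKc n).isBounded
      hLc.isBounded
  obtain ⟨x₀, hx₀, φ, hφ, hxφ⟩ :=
    exists_subseq_tendsto_of_tendsto_hausdorffDist hLne hLc hfin h hxK
  refine starShaped_iff_exists_starConvex.2 ⟨x₀, hx₀, ?_⟩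
  exact StarConvex.of_tendsto_hausdorffDist (K := K ∘ φ) (fun n => hstar (φ n)) hxφ
    (fun n => hKne (φ n)) (fun n => hKc (φ n)) hLc.isClosed (fun n => hfin (φ n))
    (h.comp hφ.tendsto_atTop)

end
end

section
/- Let u_n, u be nonempty compact star-shaped subsets of ℝ^m with H(u_n, u) → 0 in the Hausdorff metric. Then the Kuratowski upper limit of the kernels, limsup_{n→∞} ker u_n = ⋂_{n≥1} closure(⋃_{m≥n} ker u_m), is contained in ker u. -/
open Metric Set MeasureTheory Filter

noncomputable section

/-! Fix `y ∈ v` and `0 ≤ a, b` with `a + b = 1`. Hausdorff convergence gives `y_k ∈ u_k` with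
`y_k → y`, and `x` is approached along a subsequence by `x_k ∈ ker u_k`. Since `x_k` sees `y_k`,
`a • x_k + b • y_k ∈ u_k`, and these points converge to `a • x + b • y`; so the segment `[x, y]` lies
in the upper limit of the `u_k`, which is contained in the closed set `v`. -/

open Topology

lemma dist_combo_le_max_dist {E : Type*} [SeminormedAddCommGroup E] [NormedSpace ℝ E]
    {a b : ℝ} (ha : 0 ≤ a) (hb : 0 ≤ b) (hab : a + b = 1) (x y x' y' : E) :
    dist (a • x + b • y) (a • x' + b • y') ≤ max (dist x x') (dist y y') :=
  calc dist (a • x + b • y) (a • x' + b • y')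
      ≤ dist (a • x) (a • x') + dist (b • y) (b • y') := dist_add_add_le _ _ _ _
    _ = a * dist x x' + b * dist y y' := by
      rw [dist_smul₀, dist_smul₀, Real.norm_of_nonneg ha, Real.norm_of_nonneg hb]
    _ ≤ a * max (dist x x') (dist y y') + b * max (dist x x') (dist y y') := by
      gcongr
      exacts [le_max_left _ _, le_max_right _ _]
    _ = max (dist x x') (dist y y') := by rw [← add_mul, hab, one_mul]

section Kuratowski

variable {m : ℕ}

lemma mem_KLimsup_iff {C : ℕ → Set (Em m)} {x : Em m} :
    x ∈ KLimsup C ↔ ∀ ε > 0, ∃ᶠ k in atTop, ∃ x' ∈ C k, dist x' x < ε := by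
  simp only [KLimsup, mem_iInter, Metric.mem_closure_iff, mem_iUnion, frequently_atTop]
  constructor
  · rintro h ε hε N
    obtain ⟨x', ⟨k, hNk, hx'⟩, hxx'⟩ := h N ε hε
    exact ⟨k, hNk, x', hx', by rwa [dist_comm]⟩
  · rintro h N ε hε
    obtain ⟨k, hNk, x', hx', hxx'⟩ := h ε hε N
    exact ⟨x', ⟨k, hNk, hx'⟩, by rwa [dist_comm]⟩

lemma KLimsup_subset_of_tendsto_hausdorffDist {u : ℕ → Set (Em m)} {v : Set (Em m)}
    (hv : IsClosed v) (hfin : ∀ n, hausdorffEDist (u n) v ≠ ⊤)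
    (h : Tendsto (fun n => hausdorffDist (u n) v) atTop (𝓝 0)) :
    KLimsup u ⊆ v := by
  intro x hx
  rw [← hv.closure_eq, Metric.mem_closure_iff]
  intro ε hε
  have hclose : ∀ᶠ k in atTop, hausdorffDist (u k) v < ε / 2 :=
    h.eventually (gt_mem_nhds (half_pos hε))
  obtain ⟨k, ⟨x', hx', hxx'⟩, hk⟩ :=
    ((mem_KLimsup_iff.mp hx (ε / 2) (half_pos hε)).and_eventually hclose).exists
  obtain ⟨y, hy, hx'y⟩ := exists_dist_lt_of_hausdorffDist_lt hx' hk (hfin k)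
  refine ⟨y, hy, ?_⟩
  calc dist x y ≤ dist x' x + dist x' y := dist_triangle_left _ _ _
    _ < ε / 2 + ε / 2 := add_lt_add hxx' hx'y
    _ = ε := add_halves ε

lemma subset_KLiminf_of_tendsto_hausdorffDist {u : ℕ → Set (Em m)} {v : Set (Em m)}
    (hu : ∀ n, IsCompact (u n)) (hune : ∀ n, (u n).Nonempty)
    (hfin : ∀ n, hausdorffEDist (u n) v ≠ ⊤)
    (h : Tendsto (fun n => hausdorffDist (u n) v) atTop (𝓝 0)) :
    v ⊆ KLiminf u := by
  intro y hy
  choose f hfu hf using fun n => (hu n).exists_infDist_eq_dist (hune n) y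
  refine ⟨f, hfu, tendsto_iff_dist_tendsto_zero.mpr ?_⟩
  refine squeeze_zero (fun _ => dist_nonneg) (fun n => ?_) h
  rw [dist_comm, ← hf, hausdorffDist_comm]
  exact infDist_le_hausdorffDist_of_mem hy (by rw [hausdorffEDist_comm]; exact hfin n)

lemma segment_subset_KLimsup {C : ℕ → Set (Em m)} {x y : Em m}
    (hx : x ∈ KLimsup (fun n => kern (C n))) (hy : y ∈ KLiminf C) :
    segment ℝ x y ⊆ KLimsup C := by
  obtain ⟨f, hfC, hf⟩ := hy
  rintro _ ⟨a, b, ha, hb, hab, rfl⟩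
  refine mem_KLimsup_iff.mpr fun ε hε => ?_
  have hfy : ∀ᶠ k in atTop, dist (f k) y < ε := hf.eventually (ball_mem_nhds y hε)
  refine ((mem_KLimsup_iff.mp hx ε hε).and_eventually hfy).mono ?_
  rintro k ⟨⟨x', ⟨-, hx'sees⟩, hx'x⟩, hfk⟩
  exact ⟨a • x' + b • f k, hx'sees (f k) (hfC k) ⟨a, b, ha, hb, hab, rfl⟩,
    (dist_combo_le_max_dist ha hb hab _ _ _ _).trans_lt (max_lt hx'x hfk)⟩

end Kuratowski

theorem limsup_kernels_subset_kernel_general {m : ℕ}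
    (u : ℕ → Set (Em m)) (v : Set (Em m))
    (hune : ∀ n, (u n).Nonempty) (huc : ∀ n, IsCompact (u n))
    (hvne : v.Nonempty) (hvc : IsCompact v)
    (h : Tendsto (fun n => hausdorffDist (u n) v) atTop (nhds 0)) :
    KLimsup (fun n => kern (u n)) ⊆ kern v := by
  intro x hx
  have hfin : ∀ n, hausdorffEDist (u n) v ≠ ⊤ := fun n =>
    hausdorffEDist_ne_top_of_nonempty_of_bounded (hune n) hvne (huc n).isBounded hvc.isBounded
  have hsees : ∀ y ∈ v, segment ℝ x y ⊆ v := fun y hy =>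
    (segment_subset_KLimsup hx (subset_KLiminf_of_tendsto_hausdorffDist huc hune hfin h hy)).trans
      (KLimsup_subset_of_tendsto_hausdorffDist hvc.isClosed hfin h)
  obtain ⟨y₀, hy₀⟩ := hvne
  exact ⟨hsees y₀ hy₀ (left_mem_segment ℝ x y₀), hsees⟩

/-- If star-shaped compacts `u n` converge to `u` in Hausdorff
distance, then the Kuratowski upper limit of the kernels is contained in `ker u`. -/
theorem limsup_kernels_subset_kernel {m : ℕ}
    (u : ℕ → Set (Em m)) (v : Set (Em m))
    (hune : ∀ n, (u n).Nonempty) (huc : ∀ n, IsCompact (u n))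
    (hus : ∀ n, StarShaped (u n))
    (hvne : v.Nonempty) (hvc : IsCompact v) (hvs : StarShaped v)
    (h : Tendsto (fun n => hausdorffDist (u n) v) atTop (nhds 0)) :
    KLimsup (fun n => kern (u n)) ⊆ kern v :=
  limsup_kernels_subset_kernel_general u v hune huc hvne hvc h

end
end

section
/- Let u_n, u be nonempty compact subsets of ℝ^m such that each u_n is connected. If u is the Kuratowski limit of u_n, then H(u_n, u) → 0 in the Hausdorff metric. -/
/-!
Both halves of `H(u n, v) ≤ ε` are eventual inclusions into open `ε`-neighbourhoods. That `v` is
eventually inside the neighbourhood of `u n` follows from the lower limit, made uniform by a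
finite `ε/2`-net of the compact `v`. Conversely, the frontier of the `ε`-neighbourhood of `v` is
compact and disjoint from the upper limit `v`, so eventually `u n` misses it; as `u n` is
connected and meets the neighbourhood, it stays inside.
-/

open Metric Set MeasureTheory Filter

noncomputable section

theorem IsCompact.eventually_disjoint_of_disjoint_limsup {X : Type*} [TopologicalSpace X]
    {u : ℕ → Set X} {C : Set X} (hC : IsCompact C) (h : Disjoint C (⋂ n, closure (⋃ k ≥ n, u k))) :
    ∀ᶠ n in atTop, Disjoint C (u n) := by
  have hanti : Antitone fun n => closure (⋃ k ≥ n, u k) := fun m n hmn =>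
    closure_mono (biUnion_subset_biUnion_left fun k hk => le_trans hmn hk)
  obtain ⟨N, hN⟩ := hC.elim_directed_family_closed _ (fun _ => isClosed_closure)
    (disjoint_iff_inter_eq_empty.1 h) hanti.directed_ge
  filter_upwards [eventually_ge_atTop N] with n hn
  refine disjoint_iff_inter_eq_empty.2 (subset_empty_iff.1 ?_)
  exact hN ▸ inter_subset_inter_right C ((subset_biUnion_of_mem hn).trans subset_closure)

section PseudoMetric

variable {α : Type*} [PseudoMetricSpace α]

theorem eventually_mem_thickening_of_tendsto {ι : Type*} {l : Filter ι} {u : ι → Set α}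
    {f : ι → α} {x : α} (hf : ∀ i, f i ∈ u i) (hfx : Tendsto f l (nhds x)) {δ : ℝ} (hδ : 0 < δ) :
    ∀ᶠ i in l, x ∈ thickening δ (u i) :=
  (hfx.eventually (ball_mem_nhds x hδ)).mono fun i hi =>
    mem_thickening_iff.2 ⟨f i, hf i, by rw [dist_comm]; exact hi⟩

theorem TotallyBounded.eventually_subset_thickening {ι : Type*} {l : Filter ι} {u : ι → Set α}
    {v : Set α} (hv : TotallyBounded v)
    (hu : ∀ x ∈ v, ∀ δ > 0, ∀ᶠ i in l, x ∈ thickening δ (u i)) {ε : ℝ} (hε : 0 < ε) :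
    ∀ᶠ i in l, v ⊆ thickening ε (u i) := by
  obtain ⟨t, htv, htfin, hvt⟩ := finite_approx_of_totallyBounded hv (ε / 2) (half_pos hε)
  have ht : ∀ᶠ i in l, ∀ x ∈ t, x ∈ thickening (ε / 2) (u i) :=
    htfin.eventually_all.2 fun x hx => hu x (htv hx) (ε / 2) (half_pos hε)
  filter_upwards [ht] with i hi
  calc v ⊆ thickening (ε / 2) t := by simpa only [thickening_eq_biUnion_ball] using hvt
    _ ⊆ thickening (ε / 2) (thickening (ε / 2) (u i)) := thickening_subset_of_subset _ hi
    _ ⊆ thickening (ε / 2 + ε / 2) (u i) := thickening_thickening_subset _ _ _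
    _ = thickening ε (u i) := by rw [add_halves]

theorem hausdorffDist_le_of_subset_thickening {s t : Set α} {r : ℝ} (hr : 0 ≤ r)
    (hs : s ⊆ thickening r t) (ht : t ⊆ thickening r s) : hausdorffDist s t ≤ r := by
  refine hausdorffDist_le_of_mem_dist hr (fun x hx => ?_) (fun x hx => ?_)
  · obtain ⟨y, hy, hxy⟩ := mem_thickening_iff.1 (hs hx)
    exact ⟨y, hy, hxy.le⟩
  · obtain ⟨y, hy, hxy⟩ := mem_thickening_iff.1 (ht hx)
    exact ⟨y, hy, hxy.le⟩

theorem eventually_subset_thickening_of_limsup_subset [ProperSpace α] {u : ℕ → Set α}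
    {v : Set α} (hv : IsCompact v) (hvne : v.Nonempty) (hsup : ⋂ n, closure (⋃ k ≥ n, u k) ⊆ v)
    (hconn : ∀ n, IsPreconnected (u n)) {ε : ℝ} (hε : 0 < ε)
    (hcover : ∀ᶠ n in atTop, v ⊆ thickening ε (u n)) :
    ∀ᶠ n in atTop, u n ⊆ thickening ε v := by
  have hopen : IsOpen (thickening ε v) := isOpen_thickening
  have hfr : IsCompact (frontier (thickening ε v)) :=
    (hv.cthickening (r := ε)).of_isClosed_subset isClosed_frontier
      (frontier_subset_closure.trans (closure_thickening_subset_cthickening ε v))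
  have hfr_disj : Disjoint (frontier (thickening ε v)) (⋂ n, closure (⋃ k ≥ n, u k)) :=
    (disjoint_frontier_iff_isOpen.2 hopen).mono_right (hsup.trans (self_subset_thickening hε v))
  obtain ⟨x, hx⟩ := hvne
  filter_upwards [hfr.eventually_disjoint_of_disjoint_limsup hfr_disj, hcover] with n hdisj hn
  obtain ⟨y, hy, hxy⟩ := mem_thickening_iff.1 (hn hx)
  refine (hconn n).subset_of_closure_inter_subset hopen
    ⟨y, hy, mem_thickening_iff.2 ⟨x, hx, by rwa [dist_comm]⟩⟩ fun z ⟨hzcl, hzu⟩ => ?_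
  by_contra hz
  exact hdisj.ne_of_mem (hopen.frontier_eq ▸ ⟨hzcl, hz⟩) hzu rfl

end PseudoMetric

theorem kuratowski_imp_hausdorff_of_connected_general {m : ℕ}
    (u : ℕ → Set (Em m)) (v : Set (Em m))
    (hconn : ∀ n, IsConnected (u n))
    (hvne : v.Nonempty) (hvc : IsCompact v)
    (hlim : KLiminf u = v ∧ KLimsup u = v) :
    Tendsto (fun n => hausdorffDist (u n) v) atTop (nhds 0) := by
  obtain ⟨hinf, hsup⟩ := hlim
  have hcover : ∀ ε > 0, ∀ᶠ n in atTop, v ⊆ thickening ε (u n) := by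
    refine fun ε hε => hvc.totallyBounded.eventually_subset_thickening (fun x hx δ hδ => ?_) hε
    obtain ⟨f, hf, hfx⟩ : x ∈ KLiminf u := hinf ▸ hx
    exact eventually_mem_thickening_of_tendsto hf hfx hδ
  have hnear : ∀ ε > 0, ∀ᶠ n in atTop, u n ⊆ thickening ε v := fun ε hε =>
    eventually_subset_thickening_of_limsup_subset hvc hvne hsup.le
      (fun n => (hconn n).isPreconnected) hε (hcover ε hε)
  refine tendsto_order.2 ⟨fun a ha => Eventually.of_forall fun n =>
    ha.trans_le hausdorffDist_nonneg, fun a ha => ?_⟩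
  filter_upwards [hcover (a / 2) (half_pos ha), hnear (a / 2) (half_pos ha)] with n h₁ h₂
  exact (hausdorffDist_le_of_subset_thickening (half_pos ha).le h₂ h₁).trans_lt (half_lt_self ha)

/-- For connected nonempty compacts, Kuratowski convergence
implies Hausdorff convergence. -/
theorem kuratowski_imp_hausdorff_of_connected {m : ℕ}
    (u : ℕ → Set (Em m)) (v : Set (Em m))
    (hune : ∀ n, (u n).Nonempty) (huc : ∀ n, IsCompact (u n))
    (hconn : ∀ n, IsConnected (u n))
    (hvne : v.Nonempty) (hvc : IsCompact v)
    (hlim : KLiminf u = v ∧ KLimsup u = v) :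
    Tendsto (fun n => hausdorffDist (u n) v) atTop (nhds 0) :=
  kuratowski_imp_hausdorff_of_connected_general u v hconn hvne hvc hlim

end
end

section
/- Every u ∈ F_B(ℝ^m)^p is p-mean left-continuous: for every ε > 0 there exists δ > 0 such that for all 0 ≤ h < δ, (∫_h^1 H([u]_α, [u]_{α−h})^p dα)^{1/p} < ε. -/
open Metric Set MeasureTheory Filter

noncomputable section

/-!
For `a ∈ (0,1]` the compact cuts `[u]_β` decrease to `[u]_a` as `β ↑ a`, so by compactness
`H([u]_a, [u]_{a-h}) → 0` as `h → 0⁺`. Given `ε`, choose `η` with `2^p ∫_0^η H([u]_a, {0})^p`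
small. On `(h, η]` the integrand is at most `(diam [u]_{a-h})^p ≤ 2^p H([u]_{a-h}, {0})^p`, whose
integral is, after translating by `h`, at most that small quantity; on `(η, 1]` it is bounded by
`(diam [u]_{η/2})^p` and tends to `0` pointwise, so dominated convergence applies.
-/

open Topology

section Hausdorff

variable {X : Type*} [PseudoMetricSpace X] {s t : Set X}

theorem hausdorffDist_le_diam_of_subset (ht : Bornology.IsBounded t) (hst : s ⊆ t) :
    hausdorffDist s t ≤ diam t := by
  rcases s.eq_empty_or_nonempty with rfl | hs
  · simpa using diam_nonneg
  simpa [union_eq_right.2 hst] using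
    hausdorffDist_le_diam hs (ht.subset hst) (hs.mono hst) ht

theorem diam_le_two_mul_hausdorffDist_singleton (ht : Bornology.IsBounded t) (x : X) :
    diam t ≤ 2 * hausdorffDist t {x} := by
  rcases t.eq_empty_or_nonempty with rfl | hne
  · simp
  have hfin : hausdorffEDist t {x} ≠ ⊤ :=
    hausdorffEDist_ne_top_of_nonempty_of_bounded hne (singleton_nonempty x) ht
      Bornology.isBounded_singleton
  have hdist : ∀ y ∈ t, dist y x ≤ hausdorffDist t {x} := fun y hy => by
    simpa [infDist_singleton] using infDist_le_hausdorffDist_of_mem hy hfin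
  refine diam_le_of_forall_dist_le (mul_nonneg zero_le_two hausdorffDist_nonneg)
    fun y hy z hz => ?_
  calc dist y z ≤ dist y x + dist z x := dist_triangle_right y z x
    _ ≤ 2 * hausdorffDist t {x} := by linarith [hdist y hy, hdist z hz]

end Hausdorff

section LeftLimit

variable {X : Type*} [MetricSpace X] {K : ℝ → Set X}

theorem tendsto_hausdorffDist_nhdsLE_of_antitone (hK : Antitone K) {α β₀ : ℝ} (hβ₀ : β₀ < α)
    (hcpt : ∀ β ∈ Ioo β₀ α, IsCompact (K β)) (hα : ⋂ β ∈ Iio α, K β ⊆ K α) :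
    Tendsto (fun β => hausdorffDist (K α) (K β)) (𝓝[≤] α) (𝓝 0) := by
  have : Nonempty (Ioo β₀ α) := (nonempty_Ioo.2 hβ₀).to_subtype
  rw [Metric.tendsto_nhds]
  intro ε hε
  have hdir : Directed (· ⊇ ·) fun β : Ioo β₀ α => K β := fun β γ =>
    ⟨⟨max β γ, lt_max_of_lt_left β.2.1, max_lt β.2.2 γ.2.2⟩,
      hK (le_max_left (β : ℝ) γ), hK (le_max_right (β : ℝ) γ)⟩
  have hinter : ⋂ β : Ioo β₀ α, K β ⊆ K α := fun x hx => hα <| by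
    simp only [mem_iInter] at hx ⊢
    intro β hβ
    obtain ⟨γ, hγ⟩ := exists_between (max_lt hβ₀ hβ)
    exact hK (le_max_right _ _ |>.trans hγ.1.le) (hx ⟨γ, (le_max_left _ _).trans_lt hγ.1, hγ.2⟩)
  obtain ⟨β₁, hβ₁⟩ := exists_subset_nhds_of_isCompact' hdir (fun β => hcpt β β.2)
    (fun β => (hcpt β β.2).isClosed)
    (fun x hx => isOpen_thickening.mem_nhds (self_subset_thickening (half_pos hε) _ (hinter hx)))
  filter_upwards [Ioc_mem_nhdsLE β₁.2.2] with β hβ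
  have hle : hausdorffDist (K α) (K β) ≤ ε / 2 := by
    refine hausdorffDist_le_of_infDist (half_pos hε).le (fun x hx => ?_) fun x hx => ?_
    · rw [infDist_zero_of_mem (hK hβ.2 hx)]
      positivity
    · obtain ⟨z, hz, hxz⟩ := mem_thickening_iff.1 (hβ₁ (hK hβ.1.le hx))
      exact (infDist_le_dist_of_mem hz).trans hxz.le
  rw [Real.dist_eq, sub_zero, abs_of_nonneg hausdorffDist_nonneg]
  linarith

end LeftLimit

section RealIntegral

variable {G : ℝ → ℝ} {h η : ℝ}

theorem MeasureTheory.IntegrableOn.comp_sub_Ioc (hG : IntegrableOn G (Ioc 0 η)) (hh : 0 ≤ h) :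
    IntegrableOn (fun a => G (a - h)) (Ioc h η) := by
  have := ((measurePreserving_sub_right volume h).integrableOn_comp_preimage
    (measurableEmbedding_subRight h) (s := Ioc 0 (η - h))).2
    (hG.mono_set (Ioc_subset_Ioc_right (by linarith)))
  simpa [preimage_sub_const_Ioc, Function.comp_def] using this

theorem setIntegral_Ioc_comp_sub_le (hG : IntegrableOn G (Ioc 0 η))
    (hG0 : ∀ a ∈ Ioc 0 η, 0 ≤ G a) (hh : 0 ≤ h) :
    ∫ a in Ioc h η, G (a - h) ≤ ∫ a in Ioc 0 η, G a := by
  have hshift := (measurePreserving_sub_right volume h).setIntegral_preimage_emb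
    (measurableEmbedding_subRight h) G (Ioc 0 (η - h))
  simp only [preimage_sub_const_Ioc, zero_add, sub_add_cancel] at hshift
  rw [hshift]
  exact setIntegral_mono_set hG ((ae_restrict_iff' measurableSet_Ioc).2 (.of_forall hG0))
    (Ioc_subset_Ioc_right (by linarith)).eventuallyLE

theorem tendsto_setIntegral_Ioc_nhdsGT {a b : ℝ} (hab : a < b)
    (hG : IntegrableOn G (Ioc a b)) :
    Tendsto (fun η => ∫ x in Ioc a η, G x) (𝓝[>] a) (𝓝 0) := by
  have hG' : IntegrableOn G (uIcc a b) := by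
    rwa [uIcc_of_le hab.le, integrableOn_Icc_iff_integrableOn_Ioc]
  have hprim := intervalIntegral.continuousOn_primitive_interval hG' a left_mem_uIcc
  rw [uIcc_of_le hab.le] at hprim
  have := (hprim.mono Ioo_subset_Icc_self).tendsto
  rw [nhdsWithin_Ioo_eq_nhdsGT hab, intervalIntegral.integral_same] at this
  refine this.congr' (eventually_nhdsWithin_of_forall fun η hη => ?_)
  exact intervalIntegral.integral_of_le (le_of_lt hη)

end RealIntegral


section FuzzyBp

variable {m : ℕ} {p : ℝ} {u : Em m → ℝ}

theorem acut_antitone (u : Em m → ℝ) : Antitone (acut u) := fun _ _ hab _ hx => hab.trans hx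

theorem biInter_Iio_acut_subset (u : Em m → ℝ) (α : ℝ) : ⋂ β ∈ Iio α, acut u β ⊆ acut u α :=
  fun _ hx => le_of_forall_lt_imp_le_of_dense fun β hβ => mem_iInter₂.1 hx β hβ

namespace IsFuzzyBp

theorem tendsto_hausdorffDist_acut_sub (hu : IsFuzzyBp p u) {α : ℝ} (hα : α ∈ Ioc 0 1) :
    Tendsto (fun h => hausdorffDist (acut u α) (acut u (α - h))) (𝓝[≥] 0) (𝓝 0) := by
  have hsub : Tendsto (fun h : ℝ => α - h) (𝓝[≥] 0) (𝓝[≤] α) := by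
    refine tendsto_nhdsWithin_iff.2
      ⟨?_, eventually_nhdsWithin_of_forall fun h hh => sub_le_self α hh⟩
    simpa using ((continuous_sub_left α).tendsto 0).mono_left nhdsWithin_le_nhds
  exact (tendsto_hausdorffDist_nhdsLE_of_antitone (acut_antitone u) hα.1
    (fun β hβ => hu.compactCuts β ⟨hβ.1, hβ.2.le.trans hα.2⟩)
    (biInter_Iio_acut_subset u α)).comp hsub

theorem hausdorffDist_acut_sub_le_diam (hu : IsFuzzyBp p u) {a h : ℝ} (hh : 0 ≤ h)
    (ha : a - h ∈ Ioc 0 1) :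
    hausdorffDist (acut u a) (acut u (a - h)) ≤ diam (acut u (a - h)) :=
  hausdorffDist_le_diam_of_subset (hu.compactCuts _ ha).isBounded
    (acut_antitone u (sub_le_self a hh))

theorem setIntegral_Ioc_hausdorffDist_acut_sub_le (hp : 0 ≤ p) (hu : IsFuzzyBp p u)
    {h η : ℝ} (hh : 0 ≤ h) (hη : η ≤ 1)
    (hint : IntegrableOn (fun a => hausdorffDist (acut u a) (acut u (a - h)) ^ p) (Ioc h η)) :
    ∫ a in Ioc h η, hausdorffDist (acut u a) (acut u (a - h)) ^ p ≤
      2 ^ p * ∫ a in Ioc 0 η, hausdorffDist (acut u a) ({0} : Set (Em m)) ^ p := by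
  set g := fun a => hausdorffDist (acut u a) ({0} : Set (Em m)) ^ p
  have hg : IntegrableOn g (Ioc 0 η) := hu.lp.mono_set (Ioc_subset_Ioc_right hη)
  have hpointwise : ∀ a ∈ Ioc h η,
      hausdorffDist (acut u a) (acut u (a - h)) ^ p ≤ 2 ^ p * g (a - h) := fun a ha => by
    have hah : a - h ∈ Ioc 0 1 := ⟨sub_pos.2 ha.1, by linarith [ha.2]⟩
    calc hausdorffDist (acut u a) (acut u (a - h)) ^ p ≤ diam (acut u (a - h)) ^ p :=
          Real.rpow_le_rpow hausdorffDist_nonneg (hu.hausdorffDist_acut_sub_le_diam hh hah) hp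
      _ ≤ (2 * hausdorffDist (acut u (a - h)) ({0} : Set (Em m))) ^ p :=
          Real.rpow_le_rpow diam_nonneg (diam_le_two_mul_hausdorffDist_singleton
            (hu.compactCuts _ hah).isBounded 0) hp
      _ = 2 ^ p * g (a - h) := Real.mul_rpow zero_le_two hausdorffDist_nonneg
  calc ∫ a in Ioc h η, hausdorffDist (acut u a) (acut u (a - h)) ^ p
      ≤ ∫ a in Ioc h η, 2 ^ p * g (a - h) :=
        setIntegral_mono_on hint ((hg.comp_sub_Ioc hh).const_mul _) measurableSet_Ioc hpointwise
    _ = 2 ^ p * ∫ a in Ioc h η, g (a - h) := integral_const_mul _ _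
    _ ≤ 2 ^ p * ∫ a in Ioc 0 η, g a := by
        gcongr
        exact setIntegral_Ioc_comp_sub_le hg (fun a _ => Real.rpow_nonneg hausdorffDist_nonneg p) hh

/- `a ↦ H([u]_a, [u]_{a-h})` is not known to be measurable, hence the restriction of the
filter; it costs nothing below, since a non-integrable integrand has Bochner integral `0`. -/
theorem tendsto_setIntegral_Ioc_hausdorffDist_acut_sub (hp : 0 < p) (hu : IsFuzzyBp p u)
    {η : ℝ} (hη : η ∈ Ioc 0 1) :
    Tendsto (fun h => ∫ a in Ioc η 1, hausdorffDist (acut u a) (acut u (a - h)) ^ p)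
      (𝓝[≥] 0 ⊓ 𝓟 {h | AEStronglyMeasurable
        (fun a => hausdorffDist (acut u a) (acut u (a - h)) ^ p) (volume.restrict (Ioc η 1))})
      (𝓝 0) := by
  have hbound : ∀ᶠ h in 𝓝[≥] (0:ℝ), ∀ᵐ a ∂volume.restrict (Ioc η 1),
      ‖hausdorffDist (acut u a) (acut u (a - h)) ^ p‖ ≤ diam (acut u (η / 2)) ^ p := by
    filter_upwards [Ico_mem_nhdsGE (half_pos hη.1)] with h hh
    refine (ae_restrict_iff' measurableSet_Ioc).2 (.of_forall fun a ha => ?_)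
    have hah : η / 2 ≤ a - h := by linarith [ha.1, hh.2]
    rw [Real.norm_of_nonneg (Real.rpow_nonneg hausdorffDist_nonneg p)]
    refine Real.rpow_le_rpow hausdorffDist_nonneg
      ((hu.hausdorffDist_acut_sub_le_diam hh.1
        ⟨by linarith [hη.1], by linarith [ha.2, hh.1]⟩).trans ?_) hp.le
    exact diam_mono (acut_antitone u hah)
      (hu.compactCuts _ ⟨half_pos hη.1, by linarith [hη.2]⟩).isBounded
  have hlim : ∀ᵐ a ∂volume.restrict (Ioc η 1),
      Tendsto (fun h => hausdorffDist (acut u a) (acut u (a - h)) ^ p) (𝓝[≥] 0) (𝓝 0) := by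
    refine (ae_restrict_iff' measurableSet_Ioc).2 (.of_forall fun a ha => ?_)
    simpa [Real.zero_rpow hp.ne'] using
      (hu.tendsto_hausdorffDist_acut_sub ⟨hη.1.trans ha.1, ha.2⟩).rpow_const (Or.inr hp.le)
  simpa using tendsto_integral_filter_of_dominated_convergence _
    (mem_inf_of_right (mem_principal_self _)) (hbound.filter_mono inf_le_left)
    (integrableOn_const measure_Ioc_lt_top.ne) (hlim.mono fun a ha => ha.mono_left inf_le_left)

theorem eventually_setIntegral_Ioc_hausdorffDist_acut_sub_lt (hp : 0 < p) (hu : IsFuzzyBp p u)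
    {ε : ℝ} (hε : 0 < ε) :
    ∀ᶠ h in 𝓝[≥] 0, ∫ a in Ioc h 1, hausdorffDist (acut u a) (acut u (a - h)) ^ p < ε := by
  obtain ⟨η, hηsmall, hη⟩ : ∃ η,
      2 ^ p * ∫ a in Ioc 0 η, hausdorffDist (acut u a) ({0} : Set (Em m)) ^ p < ε / 2 ∧
        η ∈ Ioc 0 1 := by
    have hhead := (tendsto_setIntegral_Ioc_nhdsGT zero_lt_one hu.lp).const_mul ((2 : ℝ) ^ p)
    rw [mul_zero] at hhead
    exact ((hhead.eventually_lt_const (half_pos hε)).and (Ioc_mem_nhdsGT zero_lt_one)).exists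
  have htail := eventually_inf_principal.1 <|
    (tendsto_setIntegral_Ioc_hausdorffDist_acut_sub hp hu hη).eventually_lt_const
      (half_pos hε)
  filter_upwards [htail, Ico_mem_nhdsGE hη.1] with h htail hh
  by_cases hint : IntegrableOn (fun a => hausdorffDist (acut u a) (acut u (a - h)) ^ p) (Ioc h 1)
  swap
  · rw [integral_undef hint]
    exact hε
  rw [← Ioc_union_Ioc_eq_Ioc hh.2.le hη.2, setIntegral_union (Ioc_disjoint_Ioc_of_le le_rfl)
    measurableSet_Ioc (hint.mono_set (Ioc_subset_Ioc_right hη.2))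
    (hint.mono_set (Ioc_subset_Ioc_left hh.2.le))]
  have hhead := hu.setIntegral_Ioc_hausdorffDist_acut_sub_le hp.le hh.1 hη.2
    (hint.mono_set (Ioc_subset_Ioc_right hη.2))
  linarith [htail (hint.mono_set (Ioc_subset_Ioc_left hh.2.le)).aestronglyMeasurable]

end IsFuzzyBp

end FuzzyBp

/-- Every element of `F_B(ℝ^m)^p` is p-mean left-continuous. -/
theorem p_mean_left_continuous {m : ℕ} (p : ℝ) (hp : 1 ≤ p)
    (u : Em m → ℝ) (hu : IsFuzzyBp p u) :
    ∀ ε > (0:ℝ), ∃ δ > (0:ℝ), ∀ h : ℝ, 0 ≤ h → h < δ →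
      (∫ a in Ioc h 1, hausdorffDist (acut u a) (acut u (a - h)) ^ p) ^ (1/p) < ε := by
  intro ε hε
  have hp0 : 0 < p := zero_lt_one.trans_le hp
  obtain ⟨δ, hδ, hsmall⟩ := mem_nhdsGE_iff_exists_Ico_subset.1
    (hu.eventually_setIntegral_Ioc_hausdorffDist_acut_sub_lt hp0 (Real.rpow_pos_of_pos hε p))
  refine ⟨δ, hδ, fun h h0 hhδ => ?_⟩
  calc (∫ a in Ioc h 1, hausdorffDist (acut u a) (acut u (a - h)) ^ p) ^ (1 / p)
      < (ε ^ p) ^ (1 / p) :=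
        Real.rpow_lt_rpow (integral_nonneg fun _ => Real.rpow_nonneg hausdorffDist_nonneg p)
          (hsmall ⟨h0, hhδ⟩) (one_div_pos.2 hp0)
    _ = ε := by rw [one_div, Real.rpow_rpow_inv hε.le hp0.ne']
end
end

section
/- The space S̃^{m,p} of L_p-type general fuzzy star-shaped numbers is a closed subset of (F_B(ℝ^m)^p, d_p): if u_n ∈ S̃^{m,p} and d_p(u_n, u) → 0 with u ∈ F_B(ℝ^m)^p, then every α-cut [u]_α (α ∈ (0,1]) is star-shaped, so u ∈ S̃^{m,p}. -/
open Metric Set MeasureTheory Filter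

noncomputable section

namespace StarAux

variable {m : ℕ}

lemma acut_mono {u : Em m → ℝ} {a b : ℝ} (h : a ≤ b) : acut u b ⊆ acut u a :=
  fun _ hx => le_trans h hx

lemma acut_nonempty {p : ℝ} {u : Em m → ℝ} (hu : IsFuzzyBp p u) {a : ℝ} (ha : a ≤ 1) :
    (acut u a).Nonempty := by
  obtain ⟨x, hx⟩ := hu.normal
  exact ⟨x, by simp only [acut, mem_setOf_eq, hx, ha]⟩

lemma hne_top {s t : Set (Em m)} (hs : IsCompact s) (hs' : s.Nonempty)
    (ht : IsCompact t) (ht' : t.Nonempty) : EMetric.hausdorffEdist s t ≠ ⊤ :=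
  hausdorffEdist_ne_top_of_nonempty_of_bounded hs' ht' hs.isBounded ht.isBounded

/-- Left Hausdorff continuity of the cut map. -/
lemma left_cut_cont {p : ℝ} {u : Em m → ℝ} (hu : IsFuzzyBp p u) {a : ℝ}
    (ha : a ∈ Ioc (0:ℝ) 1) {ε : ℝ} (hε : 0 < ε) :
    ∃ c, 0 < c ∧ c < a ∧ ∀ b, c ≤ b → b ≤ a →
      hausdorffDist (acut u b) (acut u a) ≤ ε := by
  obtain ⟨ha0, ha1⟩ := ha
  set bs : ℕ → ℝ := fun j => a - (a/2) * (1/(j+1)) with hbs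
  have hone : ∀ j : ℕ, 0 < (1:ℝ)/(j+1) ∧ (1:ℝ)/(j+1) ≤ 1 := by
    intro j
    constructor
    · positivity
    · rw [div_le_one (by positivity)]
      have : (0:ℝ) ≤ j := Nat.cast_nonneg j
      linarith
  have hbpos : ∀ j, 0 < bs j := by
    intro j
    have h1 := hone j
    have : (a/2) * (1/(j+1)) ≤ (a/2) * 1 := by
      apply mul_le_mul_of_nonneg_left h1.2 (by linarith)
    simp only [hbs]
    nlinarith
  have hblt : ∀ j, bs j < a := by
    intro j
    have h1 := hone j
    have : 0 < (a/2) * (1/(j+1)) := by positivity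
    simp only [hbs]; linarith
  have hbmono : ∀ j : ℕ, bs j ≤ bs (j+1) := by
    intro j
    have h1 : (1:ℝ)/(j+1+1) ≤ 1/(j+1) := by
      apply one_div_le_one_div_of_le (by positivity)
      push_cast; linarith
    have : (a/2) * (1/(j+1+1)) ≤ (a/2) * (1/(j+1)) :=
      mul_le_mul_of_nonneg_left (by push_cast at h1 ⊢; linarith) (by linarith)
    simp only [hbs]
    push_cast
    linarith
  have hbtend : Tendsto bs atTop (nhds a) := by
    have : Tendsto (fun j : ℕ => a - (a/2) * (1/(j+1))) atTop (nhds (a - (a/2) * 0)) :=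
      tendsto_const_nhds.sub (tendsto_const_nhds.mul tendsto_one_div_add_atTop_nhds_zero_nat)
    simpa only [mul_zero, sub_zero] using this
  have hbIoc : ∀ j, bs j ∈ Ioc (0:ℝ) 1 := fun j => ⟨hbpos j, le_trans (hblt j).le ha1⟩
  set S : ℕ → Set (Em m) := fun j => acut u (bs j) ∩ (thickening ε (acut u a))ᶜ with hS
  have hexists : ∃ j, S j = ∅ := by
    by_contra hcon
    push_neg at hcon
    have hne : ∀ j, (S j).Nonempty := hcon
    have hsubS : ∀ j, S (j+1) ⊆ S j := fun j =>
      inter_subset_inter_left _ (acut_mono (hbmono j))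
    have hclosed : ∀ j, IsClosed (S j) :=
      fun j => ((hu.compactCuts _ (hbIoc j)).isClosed).inter (isOpen_thickening).isClosed_compl
    have hcomp : IsCompact (S 0) :=
      (hu.compactCuts _ (hbIoc 0)).inter_right (isOpen_thickening).isClosed_compl
    obtain ⟨x, hx⟩ := IsCompact.nonempty_iInter_of_sequence_nonempty_isCompact_isClosed
      S hsubS hne hcomp hclosed
    simp only [mem_iInter] at hx
    have hxa : a ≤ u x := le_of_tendsto' hbtend (fun j => (hx j).1)
    have : x ∈ thickening ε (acut u a) := self_subset_thickening hε _ hxa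
    exact (hx 0).2 this
  obtain ⟨j, hj⟩ := hexists
  have hsubthick : acut u (bs j) ⊆ thickening ε (acut u a) := by
    intro x hx
    by_contra hxt
    have : x ∈ S j := ⟨hx, hxt⟩
    rw [hj] at this
    exact this
  refine ⟨bs j, hbpos j, hblt j, ?_⟩
  intro b hcb hba
  apply hausdorffDist_le_of_mem_dist hε.le
  · intro x hx
    have : x ∈ thickening ε (acut u a) := hsubthick (acut_mono hcb hx)
    obtain ⟨z, hz, hdz⟩ := mem_thickening_iff.1 this
    exact ⟨z, hz, hdz.le⟩
  · intro x hx
    exact ⟨x, acut_mono hba hx, by rw [dist_self]; exact hε.le⟩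

lemma measurable_comp_countable {e : ℝ → ℝ} (he : Measurable e)
    (hc : (Set.range e).Countable) (g : ℝ → ℝ) : Measurable (g ∘ e) := by
  intro s _
  have : (g ∘ e) ⁻¹' s = e ⁻¹' ((g ⁻¹' s) ∩ Set.range e) := by
    ext x
    simp [Set.mem_preimage]
  rw [this]
  exact he ((hc.mono inter_subset_right).measurableSet)

/-- triangle-type bound -/
lemma hd_bound {A A' B B' : Set (Em m)}
    (hA : IsCompact A) (hA0 : A.Nonempty) (hA' : IsCompact A') (hA0' : A'.Nonempty)
    (hB : IsCompact B) (hB0 : B.Nonempty) (hB' : IsCompact B') (hB0' : B'.Nonempty) :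
    hausdorffDist A B ≤ hausdorffDist A A' + hausdorffDist A' B' + hausdorffDist B' B := by
  have t1 : hausdorffDist A B ≤ hausdorffDist A A' + hausdorffDist A' B :=
    hausdorffDist_triangle (hne_top hA hA0 hA' hA0')
  have t2 : hausdorffDist A' B ≤ hausdorffDist A' B' + hausdorffDist B' B :=
    hausdorffDist_triangle (hne_top hA' hA0' hB' hB0')
  linarith


/-- a.e.-strong measurability of the Hausdorff distance between cut families. -/
lemma g_aesm {p : ℝ} {u w : Em m → ℝ} (hu : IsFuzzyBp p u) (hw : IsFuzzyBp p w) :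
    AEStronglyMeasurable (fun a => hausdorffDist (acut u a) (acut w a))
      (volume.restrict (Ioc (0:ℝ) 1)) := by
  set g : ℝ → ℝ := fun a => hausdorffDist (acut u a) (acut w a) with hgdef
  set e : ℕ → ℝ → ℝ := fun k a => (⌊a * (k+1)⌋ : ℝ) / (k+1) with hedef
  have hek : ∀ k a, e k a ≤ a ∧ a - 1/(k+1) < e k a := by
    intro k a
    have hk1 : (0:ℝ) < (k:ℝ)+1 := by positivity
    constructor
    · rw [hedef]
      rw [div_le_iff₀ hk1]
      exact (Int.floor_le _)
    · rw [hedef]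
      simp only
      rw [lt_div_iff₀ hk1]
      have := Int.sub_one_lt_floor (a * ((k:ℝ)+1))
      have h2 : (a - 1/((k:ℝ)+1)) * ((k:ℝ)+1) = a * ((k:ℝ)+1) - 1 := by
        field_simp
      rw [h2]
      linarith
  have hemeas : ∀ k, Measurable (g ∘ (e k)) := by
    intro k
    apply measurable_comp_countable
    · have hfl : Measurable fun a : ℝ => ⌊a * ((k:ℝ)+1)⌋ :=
        (Int.measurable_floor).comp (measurable_id.mul_const _)
      have hcast : Measurable (fun z : ℤ => (z:ℝ)) :=
        continuous_of_discreteTopology.measurable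
      exact (hcast.comp hfl).div_const _
    · apply Set.Countable.mono ?_ (Set.countable_range (fun z : ℤ => (z:ℝ)/(k+1)))
      rintro x ⟨a, rfl⟩
      exact ⟨⌊a * (k+1)⌋, rfl⟩
  have hconv : ∀ a ∈ Ioc (0:ℝ) 1, Tendsto (fun k => g (e k a)) atTop (nhds (g a)) := by
    intro a ha
    rw [Metric.tendsto_atTop]
    intro ε hε
    have hε3 : 0 < ε/3 := by linarith
    obtain ⟨cu, hcu0, hcua, hcu⟩ := left_cut_cont hu ha hε3
    obtain ⟨cw, hcw0, hcwa, hcw⟩ := left_cut_cont hw ha hε3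
    set c := max cu cw with hc
    have hca : c < a := max_lt hcua hcwa
    obtain ⟨N, hN⟩ := exists_nat_one_div_lt (show (0:ℝ) < a - c by linarith)
    refine ⟨N, fun k hk => ?_⟩
    have h1 : (1:ℝ)/(k+1) ≤ 1/(N+1) := by
      apply one_div_le_one_div_of_le (by positivity)
      push_cast
      have : (N:ℝ) ≤ k := Nat.cast_le.2 hk
      linarith
    have hbk := hek k a
    set b := e k a with hb
    have hcb : c < b := by linarith
    have hba : b ≤ a := hbk.1
    have hbIoc : b ∈ Ioc (0:ℝ) 1 :=
      ⟨lt_trans (lt_of_lt_of_le hcu0 (le_max_left _ _)) hcb, le_trans hba ha.2⟩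
    have hu1 : hausdorffDist (acut u b) (acut u a) ≤ ε/3 :=
      hcu b (le_trans (le_max_left _ _) hcb.le) hba
    have hw1 : hausdorffDist (acut w b) (acut w a) ≤ ε/3 :=
      hcw b (le_trans (le_max_right _ _) hcb.le) hba
    have hcompub := hu.compactCuts b hbIoc
    have hcompua := hu.compactCuts a ha
    have hcompwb := hw.compactCuts b hbIoc
    have hcompwa := hw.compactCuts a ha
    have hneub := acut_nonempty hu hbIoc.2
    have hneua := acut_nonempty hu ha.2
    have hnewb := acut_nonempty hw hbIoc.2
    have hnewa := acut_nonempty hw ha.2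
    have t1 : g b ≤ hausdorffDist (acut u b) (acut u a) + g a
        + hausdorffDist (acut w a) (acut w b) :=
      hd_bound hcompub hneub hcompua hneua hcompwb hnewb hcompwa hnewa
    have t2 : g a ≤ hausdorffDist (acut u a) (acut u b) + g b
        + hausdorffDist (acut w b) (acut w a) :=
      hd_bound hcompua hneua hcompub hneub hcompwa hnewa hcompwb hnewb
    have hsymm1 : hausdorffDist (acut u a) (acut u b) = hausdorffDist (acut u b) (acut u a) :=
      hausdorffDist_comm
    have hsymm2 : hausdorffDist (acut w a) (acut w b) = hausdorffDist (acut w b) (acut w a) :=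
      hausdorffDist_comm
    rw [Real.dist_eq, abs_sub_lt_iff]
    constructor <;> [skip; skip] <;> rw [hsymm1] at t2 <;> rw [hsymm2] at t1 <;> linarith
  apply aestronglyMeasurable_of_tendsto_ae atTop
    (fun k => ((hemeas k).aestronglyMeasurable : AEStronglyMeasurable (g ∘ (e k)) _))
  filter_upwards [ae_restrict_mem measurableSet_Ioc] with a ha
  exact hconv a ha

lemma g_integrable {p : ℝ} (hp : 1 ≤ p) {u w : Em m → ℝ}
    (hu : IsFuzzyBp p u) (hw : IsFuzzyBp p w) :
    IntegrableOn (fun a => hausdorffDist (acut u a) (acut w a) ^ p) (Ioc (0:ℝ) 1) := by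
  have hp0 : 0 < p := lt_of_lt_of_le one_pos hp
  have hcont : Continuous fun x : ℝ => x ^ p :=
    continuous_iff_continuousAt.2 fun x => Real.continuousAt_rpow_const x p (Or.inr hp0.le)
  have hsm : AEStronglyMeasurable (fun a => hausdorffDist (acut u a) (acut w a) ^ p)
      (volume.restrict (Ioc (0:ℝ) 1)) :=
    hcont.comp_aestronglyMeasurable (g_aesm hu hw)
  have hbound : Integrable (fun a => 2^p * (hausdorffDist (acut u a) ({0}:Set (Em m)) ^ p
      + hausdorffDist (acut w a) ({0}:Set (Em m)) ^ p)) (volume.restrict (Ioc (0:ℝ) 1)) :=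
    (hu.lp.add hw.lp).const_mul _
  refine hbound.mono' hsm ?_
  filter_upwards [ae_restrict_mem measurableSet_Ioc] with a ha
  set h1 := hausdorffDist (acut u a) ({0}:Set (Em m)) with hh1
  set h2 := hausdorffDist (acut w a) ({0}:Set (Em m)) with hh2
  have h1n : 0 ≤ h1 := hausdorffDist_nonneg
  have h2n : 0 ≤ h2 := hausdorffDist_nonneg
  have hgn : (0:ℝ) ≤ hausdorffDist (acut u a) (acut w a) := hausdorffDist_nonneg
  have hgle : hausdorffDist (acut u a) (acut w a) ≤ h1 + h2 := by
    have t1 : hausdorffDist (acut u a) (acut w a) ≤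
        hausdorffDist (acut u a) ({0}:Set (Em m)) + hausdorffDist ({0}:Set (Em m)) (acut w a) :=
      hausdorffDist_triangle (hne_top (hu.compactCuts a ha) (acut_nonempty hu ha.2)
        isCompact_singleton (singleton_nonempty _))
    have t2 : hausdorffDist ({0}:Set (Em m)) (acut w a) = h2 := hausdorffDist_comm
    rw [t2] at t1
    exact t1
  rw [Real.norm_eq_abs, abs_of_nonneg (Real.rpow_nonneg hgn p)]
  calc hausdorffDist (acut u a) (acut w a) ^ p ≤ (h1 + h2) ^ p :=
        Real.rpow_le_rpow hgn hgle hp0.le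
    _ ≤ (2 * max h1 h2) ^ p := by
        apply Real.rpow_le_rpow (by linarith) ?_ hp0.le
        rcases le_total h1 h2 with hc | hc
        · rw [max_eq_right hc]; linarith
        · rw [max_eq_left hc]; linarith
    _ = 2^p * (max h1 h2)^p := Real.mul_rpow (by norm_num) (le_max_of_le_left h1n)
    _ ≤ 2^p * (h1^p + h2^p) := by
        apply mul_le_mul_of_nonneg_left ?_ (Real.rpow_nonneg (by norm_num) p)
        rcases le_total h1 h2 with hc | hc
        · rw [max_eq_right hc]
          exact le_add_of_nonneg_left (Real.rpow_nonneg h1n p)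
        · rw [max_eq_left hc]
          exact le_add_of_nonneg_right (Real.rpow_nonneg h2n p)


lemma exists_good_level {p : ℝ} (hp : 1 ≤ p) {u : ℕ → Em m → ℝ} {v : Em m → ℝ}
    (hu : ∀ n, IsFuzzyBp p (u n)) (hv : IsFuzzyBp p v)
    (h : Tendsto (fun n => dp p (u n) v) atTop (nhds 0))
    {a : ℝ} (ha : a ∈ Ioc (0:ℝ) 1) {c ε : ℝ} (hc0 : 0 < c) (hca : c < a) (hε : 0 < ε) :
    ∃ b ∈ Ioo c a, ∃ n, hausdorffDist (acut (u n) b) (acut v b) < ε := by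
  have hp0 : 0 < p := lt_of_lt_of_le one_pos hp
  set η := ε ^ p * (a - c) with hηdef
  have hηpos : 0 < η := mul_pos (Real.rpow_pos_of_pos hε p) (by linarith)
  obtain ⟨n, hn⟩ := (h.eventually_lt_const (Real.rpow_pos_of_pos hηpos (1/p))).exists
  set f : ℝ → ℝ := fun b => hausdorffDist (acut (u n) b) (acut v b) ^ p with hfdef
  have hfnn : ∀ b, 0 ≤ f b := fun b => Real.rpow_nonneg hausdorffDist_nonneg p
  have hint : IntegrableOn f (Ioc (0:ℝ) 1) := g_integrable hp (hu n) hv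
  have hInn : 0 ≤ ∫ b in Ioc (0:ℝ) 1, f b := integral_nonneg hfnn
  have hIeq : ((∫ b in Ioc (0:ℝ) 1, f b) ^ (1/p)) ^ p = ∫ b in Ioc (0:ℝ) 1, f b := by
    rw [← Real.rpow_mul hInn, one_div_mul_cancel (ne_of_gt hp0), Real.rpow_one]
  have hηeq : (η ^ (1/p)) ^ p = η := by
    rw [← Real.rpow_mul hηpos.le, one_div_mul_cancel (ne_of_gt hp0), Real.rpow_one]
  have hIlt : ∫ b in Ioc (0:ℝ) 1, f b < η := by
    have hd : dp p (u n) v = (∫ b in Ioc (0:ℝ) 1, f b) ^ (1/p) := rfl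
    have hd0 : 0 ≤ dp p (u n) v := by rw [hd]; exact Real.rpow_nonneg hInn _
    have := Real.rpow_lt_rpow hd0 hn hp0
    rw [hd] at this
    rw [hIeq, hηeq] at this
    exact this
  by_contra hcon
  push_neg at hcon
  have hsub : Ioo c a ⊆ Ioc (0:ℝ) 1 := fun x hx => ⟨lt_trans hc0 hx.1, le_trans hx.2.le ha.2⟩
  have hIoo : IntegrableOn f (Ioo c a) := hint.mono_set hsub
  have hlow : ε ^ p * (a - c) ≤ ∫ b in Ioo c a, f b := by
    have hconstI : IntegrableOn (fun _ : ℝ => ε ^ p) (Ioo c a) := by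
      refine integrableOn_const ?_
      rw [Real.volume_Ioo]
      exact ENNReal.ofReal_ne_top
    have hmono := setIntegral_mono_on hconstI hIoo measurableSet_Ioo
      (fun b hb => Real.rpow_le_rpow hε.le (hcon b hb n) hp0.le)
    have hconst : ∫ _ in Ioo c a, (ε ^ p) = (a - c) * ε ^ p := by
      rw [setIntegral_const, measureReal_def, Real.volume_Ioo, ENNReal.toReal_ofReal (by linarith), smul_eq_mul]
    rw [hconst] at hmono
    linarith
  have hup : ∫ b in Ioo c a, f b ≤ ∫ b in Ioc (0:ℝ) 1, f b :=
    setIntegral_mono_set hint (Eventually.of_forall hfnn) (HasSubset.Subset.eventuallyLE hsub)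
  rw [hηdef] at hIlt
  linarith

end StarAux

open StarAux in
/-- `S̃^{m,p}` is closed in `(F_B(ℝ^m)^p, d_p)`: a `d_p`-limit
of fuzzy sets with star-shaped cuts has star-shaped cuts. -/
theorem gen_star_shaped_closed {m : ℕ} (p : ℝ) (hp : 1 ≤ p)
    (u : ℕ → Em m → ℝ) (v : Em m → ℝ)
    (hu : ∀ n, IsFuzzyBp p (u n))
    (hus : ∀ n, ∀ a ∈ Ioc (0:ℝ) 1, StarShaped (acut (u n) a))
    (hv : IsFuzzyBp p v)
    (h : Tendsto (fun n => dp p (u n) v) atTop (nhds 0)) :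
    ∀ a ∈ Ioc (0:ℝ) 1, StarShaped (acut v a) := by
  intro a ha
  obtain ⟨ha0, ha1⟩ := ha
  have key : ∀ k : ℕ, ∃ b ∈ Ioo (max (a - 1/(k+1)) (a/2)) a, ∃ n,
      hausdorffDist (acut (u n) b) (acut v b) < 1/(k+1) := by
    intro k
    apply exists_good_level hp hu hv h ⟨ha0, ha1⟩ ?_ ?_ (by positivity)
    · exact lt_of_lt_of_le (by linarith) (le_max_right _ _)
    · apply max_lt ?_ (by linarith)
      have : (0:ℝ) < 1/(k+1) := by positivity
      linarith
  choose b hb n hn using key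
  have hbIoc : ∀ k, b k ∈ Ioc (0:ℝ) 1 := fun k =>
    ⟨lt_of_le_of_lt (le_trans (by linarith : (0:ℝ) ≤ a/2) (le_max_right _ _)) (hb k).1,
      le_trans (hb k).2.le ha1⟩
  have hb2 : ∀ k, a/2 ≤ b k := fun k => le_trans (le_max_right _ _) (hb k).1.le
  have hblow : ∀ k, a - 1/(k+1) < b k := fun k => lt_of_le_of_lt (le_max_left _ _) (hb k).1
  set K : ℕ → Set (Em m) := fun k => acut (u (n k)) (b k) with hK
  set T : ℕ → Set (Em m) := fun k => acut v (b k) with hT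
  have hKc : ∀ k, IsCompact (K k) := fun k => (hu (n k)).compactCuts _ (hbIoc k)
  have hKne : ∀ k, (K k).Nonempty := fun k => acut_nonempty (hu (n k)) (hbIoc k).2
  have hTc : ∀ k, IsCompact (T k) := fun k => hv.compactCuts _ (hbIoc k)
  have hTne : ∀ k, (T k).Nonempty := fun k => acut_nonempty hv (hbIoc k).2
  have hfin : ∀ k, EMetric.hausdorffEdist (K k) (T k) ≠ ⊤ := fun k =>
    hne_top (hKc k) (hKne k) (hTc k) (hTne k)
  have hstars : ∀ k, StarShaped (K k) := fun k => hus (n k) (b k) (hbIoc k)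
  choose xs hxsK hxs using hstars
  -- helper : limits of points asymptotically in T (φ k) are in acut v a
  have helper : ∀ (φ : ℕ → ℕ), StrictMono φ → ∀ (q : ℕ → Em m) (z : Em m),
      (∀ k, infDist (q k) (T (φ k)) ≤ 1 / (φ k + 1)) →
      Tendsto q atTop (nhds z) → z ∈ acut v a := by
    intro φ hφ q z hq hlim
    have hsub : ∀ c' ∈ Ioo (0:ℝ) a, c' ≤ v z := by
      intro c' hc'
      have hc'Ioc : c' ∈ Ioc (0:ℝ) 1 := ⟨hc'.1, le_trans hc'.2.le ha1⟩
      have hcl : IsClosed (acut v c') := (hv.compactCuts _ hc'Ioc).isClosed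
      have hcne : (acut v c').Nonempty := acut_nonempty hv hc'Ioc.2
      obtain ⟨N, hN⟩ := exists_nat_one_div_lt (show (0:ℝ) < a - c' by linarith [hc'.2])
      have hbound : ∀ᶠ k in atTop, infDist (q k) (acut v c') ≤ 1/(k+1) := by
        filter_upwards [eventually_ge_atTop N] with k hk
        have hφk : (N:ℝ) ≤ (φ k : ℝ) := by
          exact_mod_cast le_trans hk (hφ.le_apply)
        have h1 : (1:ℝ)/(φ k + 1) ≤ 1/(N+1) :=
          one_div_le_one_div_of_le (by positivity) (by linarith)
        have hTk : T (φ k) ⊆ acut v c' := by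
          apply acut_mono
          have := hblow (φ k)
          linarith
        have h2 : (1:ℝ)/(k+1) ≥ 1/(φ k + 1) := by
          apply one_div_le_one_div_of_le (by positivity)
          have : (k:ℝ) ≤ (φ k : ℝ) := by exact_mod_cast hφ.le_apply
          linarith
        calc infDist (q k) (acut v c')
            ≤ infDist (q k) (T (φ k)) := infDist_le_infDist_of_subset hTk (hTne (φ k))
          _ ≤ 1/(φ k + 1) := hq k
          _ ≤ 1/(k+1) := h2
      have hlim2 : Tendsto (fun k => infDist (q k) (acut v c')) atTop
          (nhds (infDist z (acut v c'))) :=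
        ((continuous_infDist_pt (acut v c')).tendsto z).comp hlim
      have hle : infDist z (acut v c') ≤ 0 :=
        le_of_tendsto_of_tendsto hlim2 tendsto_one_div_add_atTop_nhds_zero_nat hbound
      exact (hcl.mem_iff_infDist_zero hcne).2 (le_antisymm hle infDist_nonneg)
    by_contra hza
    have hvz : v z < a := by
      simp only [acut, mem_setOf_eq, not_le] at hza
      exact hza
    set c' := max ((v z + a)/2) (a/2) with hc'
    have hc'mem : c' ∈ Ioo (0:ℝ) a :=
      ⟨lt_of_lt_of_le (by linarith) (le_max_right _ _), max_lt (by linarith) (by linarith)⟩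
    have h1 := hsub c' hc'mem
    have h2 : (v z + a)/2 ≤ c' := le_max_left _ _
    linarith
  -- the candidate kernel point
  obtain ⟨R, hR⟩ := ((hv.compactCuts (a/2) ⟨by linarith, by linarith⟩).isBounded).subset_closedBall (0 : Em m)
  have hxball : ∀ k, xs k ∈ closedBall (0 : Em m) (R + 1) := by
    intro k
    obtain ⟨y, hyT, hyd⟩ := (hTc k).exists_infDist_eq_dist (hTne k) (xs k)
    have hd1 : dist (xs k) y ≤ 1 := by
      rw [← hyd]
      refine le_trans (infDist_le_hausdorffDist_of_mem (hxsK k) (hfin k)) ?_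
      refine le_trans (hn k).le ?_
      rw [div_le_one (by positivity)]
      have : (0:ℝ) ≤ k := Nat.cast_nonneg k
      linarith
    have hy : y ∈ closedBall (0 : Em m) R := hR (acut_mono (hb2 k) hyT)
    rw [mem_closedBall] at hy ⊢
    calc dist (xs k) 0 ≤ dist (xs k) y + dist y 0 := dist_triangle _ _ _
      _ ≤ 1 + R := add_le_add hd1 hy
      _ = R + 1 := by ring
  obtain ⟨x, -, φ, hφ, hxlim⟩ :=
    (isCompact_closedBall (0 : Em m) (R + 1)).tendsto_subseq hxball
  have hdk : ∀ k, infDist (xs (φ k)) (T (φ k)) ≤ 1 / (φ k + 1) := fun k =>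
    le_trans (infDist_le_hausdorffDist_of_mem (hxsK (φ k)) (hfin (φ k))) (hn (φ k)).le
  have hx : x ∈ acut v a := helper φ hφ (fun k => xs (φ k)) x hdk hxlim
  refine ⟨x, hx, ?_⟩
  intro y hy w hw
  obtain ⟨s, t, hs, ht, hst, rfl⟩ := hw
  have hyT : ∀ k, y ∈ T k := fun k => acut_mono (hb k).2.le hy
  have hzs : ∀ k, ∃ z ∈ K k, dist y z ≤ 1/(k+1) := by
    intro k
    obtain ⟨z, hz, hzd⟩ := (hKc k).exists_infDist_eq_dist (hKne k) y
    refine ⟨z, hz, ?_⟩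
    rw [← hzd]
    calc infDist y (K k) ≤ hausdorffDist (T k) (K k) :=
          infDist_le_hausdorffDist_of_mem (hyT k) (by rw [EMetric.hausdorffEdist_comm]; exact hfin k)
      _ = hausdorffDist (K k) (T k) := hausdorffDist_comm
      _ ≤ 1/(k+1) := (hn k).le
  choose zs hzsK hzsd using hzs
  have hzlim : Tendsto (fun k => zs (φ k)) atTop (nhds y) := by
    rw [tendsto_iff_dist_tendsto_zero]
    refine squeeze_zero (fun k => dist_nonneg) (fun k => ?_) tendsto_one_div_add_atTop_nhds_zero_nat
    rw [dist_comm]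
    refine le_trans (hzsd (φ k)) ?_
    apply one_div_le_one_div_of_le (by positivity)
    have : (k:ℝ) ≤ (φ k : ℝ) := by exact_mod_cast hφ.le_apply
    linarith
  set q : ℕ → Em m := fun k => s • xs (φ k) + t • zs (φ k) with hq
  have hqK : ∀ k, q k ∈ K (φ k) := fun k =>
    hxs (φ k) (zs (φ k)) (hzsK (φ k)) ⟨s, t, hs, ht, hst, rfl⟩
  have hqd : ∀ k, infDist (q k) (T (φ k)) ≤ 1 / (φ k + 1) := fun k =>
    le_trans (infDist_le_hausdorffDist_of_mem (hqK k) (hfin (φ k))) (hn (φ k)).le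
  have hqlim : Tendsto q atTop (nhds (s • x + t • y)) :=
    (hxlim.const_smul s).add (hzlim.const_smul t)
  exact helper φ hφ q _ hqd hqlim


end
end

section
/- The space S^{m,p} of L_p-type fuzzy star-shaped numbers (those u ∈ S̃^{m,p} with ⋂_{α∈(0,1]} ker [u]_α ≠ ∅) is a closed subset of (S̃^{m,p}, d_p). Moreover, if u_n ∈ S^{m,p} converge to u ∈ S̃^{m,p} in d_p, then u ∈ S^{m,p} and limsup_{n→∞} ker u_n ⊆ ker u, where ker v = ⋂_{α∈(0,1]} ker [v]_α. -/
open Metric Set MeasureTheory Filter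

noncomputable section

/-!
Convergence in `d_p` means `L^p`-convergence of `α ↦ H([u_n]_α, [v]_α)` on `(0, 1]` (this
function is measurable because cuts are left continuous in the Hausdorff metric), so along a
subsequence almost every cut `[u_n]_α` converges to `[v]_α`. Kernels pass to Hausdorff limits:
if `y_n ∈ ker K_n`, `y_n → x` and `K_n → K`, then each segment `[x, y']`, `y' ∈ K`, is a limit of
segments `[y_n, w_n] ⊆ K_n`. Hence a limit of kernel points lies in `ker [v]_α` for a dense set
of levels `α`, and then for every level, since `[v]_α = ⋂_{β < α} [v]_β` and kernels are stable
under intersections. For nonemptiness, kernel points of `u_n` eventually lie near the compact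
cut `[v]_β` at such a level `β`, so they have a limit point.
-/

open Topology

section HausdorffDistance

variable {α : Type*} [PseudoMetricSpace α]

theorem abs_hausdorffDist_sub_hausdorffDist_le {s s' t t' : Set α}
    (hs : hausdorffEDist s s' ≠ ⊤) (ht : hausdorffEDist t t' ≠ ⊤) :
    |hausdorffDist s t - hausdorffDist s' t'| ≤ hausdorffDist s s' + hausdorffDist t t' := by
  have h₁ := hausdorffDist_triangle (s := s) (t := s') (u := t) hs
  have h₂ := hausdorffDist_triangle' (s := s') (t := t') (u := t)
    (by rwa [hausdorffEDist_comm] at ht)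
  have h₃ := hausdorffDist_triangle (s := s') (t := s) (u := t')
    (by rwa [hausdorffEDist_comm] at hs)
  have h₄ := hausdorffDist_triangle' (s := s) (t := t) (u := t') ht
  rw [hausdorffDist_comm (s := t') (t := t)] at h₂
  rw [hausdorffDist_comm (s := s') (t := s)] at h₃
  rw [abs_le]
  constructor <;> linarith

theorem mem_cthickening_of_hausdorffDist_le {s t : Set α} {x : α} {δ : ℝ} (hx : x ∈ s)
    (hfin : hausdorffEDist s t ≠ ⊤) (hδ : hausdorffDist s t ≤ δ) : x ∈ cthickening δ t :=
  mem_cthickening_iff.2 <| (infEDist_le_hausdorffEDist_of_mem hx).trans <| by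
    rw [← ENNReal.ofReal_toReal hfin]
    exact ENNReal.ofReal_le_ofReal hδ

theorem tendsto_hausdorffDist_nhdsLT_of_antitone {ι : Type*} [LinearOrder ι]
    [TopologicalSpace ι] [OrderTopology ι] {K : ι → Set α} (hK : Antitone K)
    (hcl : ∀ i, IsClosed (K i)) {a b : ι} (hba : b < a) (hb : IsCompact (K b))
    (ha : ⋂ i ∈ Iio a, K i ⊆ K a) :
    Tendsto (fun i => hausdorffDist (K i) (K a)) (𝓝[<] a) (𝓝 0) := by
  refine Metric.tendsto_nhds.2 fun ε hε => ?_
  have : Nonempty (Ico b a) := ⟨⟨b, le_rfl, hba⟩⟩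
  -- the compact sets `K c`, `c ∈ [b, a)`, shrink to `K a`, so one of them enters the open
  -- `ε / 2`-thickening of `K a`
  obtain ⟨⟨c, hbc, hca⟩, hc⟩ := exists_subset_nhds_of_isCompact' (V := fun i : Ico b a => K i)
    (fun i j => ⟨max i j, hK (le_max_left _ _), hK (le_max_right _ _)⟩)
    (fun i => hb.of_isClosed_subset (hcl i) (hK i.2.1)) (fun i => hcl i)
    (U := thickening (ε / 2) (K a)) fun x hx => isOpen_thickening.mem_nhds <|
      self_subset_thickening (half_pos hε) _ <| ha <| mem_iInter₂.2 fun i hi => by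
        rcases le_or_gt b i with hbi | hib
        · exact mem_iInter.1 hx ⟨i, hbi, hi⟩
        · exact hK hib.le (mem_iInter.1 hx ⟨b, le_rfl, hba⟩)
  filter_upwards [Ioo_mem_nhdsLT hca] with i hi
  have hle : hausdorffDist (K i) (K a) ≤ ε / 2 := by
    refine hausdorffDist_le_of_mem_dist (half_pos hε).le (fun x hx => ?_)
      fun x hx => ⟨x, hK hi.2.le hx, by simp [(half_pos hε).le]⟩
    obtain ⟨y, hy, hxy⟩ := mem_thickening_iff.1 (hc (hK hi.1.le hx))
    exact ⟨y, hy, hxy.le⟩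
  rw [Real.dist_eq, sub_zero, abs_of_nonneg hausdorffDist_nonneg]
  linarith

theorem mem_of_tendsto_of_tendsto_hausdorffDist_s15 {K : Set α} (hK : IsClosed K) {C : ℕ → Set α}
    (hfin : ∀ n, hausdorffEDist (C n) K ≠ ⊤)
    (hC : Tendsto (fun n => hausdorffDist (C n) K) atTop (𝓝 0))
    {z : ℕ → α} (hz : ∀ n, z n ∈ C n) {x : α} (hx : Tendsto z atTop (𝓝 x)) : x ∈ K := by
  have hlim : Tendsto (fun n => infDist (z n) K) atTop (𝓝 (infDist x K)) :=
    ((continuous_infDist_pt K).tendsto x).comp hx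
  have hzero : Tendsto (fun n => infDist (z n) K) atTop (𝓝 0) :=
    squeeze_zero (fun _ => infDist_nonneg)
      (fun n => infDist_le_hausdorffDist_of_mem (hz n) (hfin n)) hC
  rw [hK.mem_iff_infDist_zero (nonempty_of_hausdorffEDist_ne_top ⟨z 0, hz 0⟩ (hfin 0))]
  exact tendsto_nhds_unique hlim hzero

theorem exists_tendsto_of_tendsto_hausdorffDist_s15 {K : Set α} {C : ℕ → Set α}
    (hfin : ∀ n, hausdorffEDist (C n) K ≠ ⊤)
    (hC : Tendsto (fun n => hausdorffDist (C n) K) atTop (𝓝 0)) {y : α} (hy : y ∈ K) :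
    ∃ w : ℕ → α, (∀ n, w n ∈ C n) ∧ Tendsto w atTop (𝓝 y) := by
  have : ∀ n : ℕ, ∃ w ∈ C n, dist w y < hausdorffDist (C n) K + 1 / (n + 1) := fun n =>
    exists_dist_lt_of_hausdorffDist_lt' hy (lt_add_of_pos_right _ Nat.one_div_pos_of_nat)
      (hfin n)
  choose w hwC hwy using this
  refine ⟨w, hwC, tendsto_iff_dist_tendsto_zero.2 ?_⟩
  have hbound := hC.add (tendsto_one_div_add_atTop_nhds_zero_nat (𝕜 := ℝ))
  rw [add_zero] at hbound
  exact squeeze_zero (fun _ => dist_nonneg) (fun n => (hwy n).le) hbound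

end HausdorffDistance

theorem add_rpow_le_two_rpow_mul_add_rpow {x y p : ℝ} (hx : 0 ≤ x) (hy : 0 ≤ y) (hp : 0 ≤ p) :
    (x + y) ^ p ≤ 2 ^ p * (x ^ p + y ^ p) := by
  wlog hxy : x ≤ y generalizing x y
  · simpa only [add_comm] using this hy hx (le_of_not_ge hxy)
  calc (x + y) ^ p ≤ (2 * y) ^ p := by gcongr; linarith
    _ = 2 ^ p * y ^ p := Real.mul_rpow zero_le_two hy
    _ ≤ 2 ^ p * (x ^ p + y ^ p) := by gcongr; exact le_add_of_nonneg_left (by positivity)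

theorem tendsto_floor_mul_div_nhdsLE (a : ℝ) :
    Tendsto (fun k : ℕ => (⌊a * (k + 1)⌋ : ℝ) / (k + 1)) atTop (𝓝[≤] a) := by
  have hk : ∀ k : ℕ, (0 : ℝ) < k + 1 := fun k => by positivity
  have hle : ∀ k : ℕ, (⌊a * (k + 1)⌋ : ℝ) / (k + 1) ≤ a := fun k => by
    rw [div_le_iff₀ (hk k)]
    exact Int.floor_le _
  have hge : ∀ k : ℕ, a - 1 / (k + 1) ≤ (⌊a * (k + 1)⌋ : ℝ) / (k + 1) := fun k => by
    rw [le_div_iff₀ (hk k), sub_mul, one_div_mul_cancel (hk k).ne']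
    linarith [Int.lt_floor_add_one (a * (k + 1))]
  have hlow : Tendsto (fun k : ℕ => a - 1 / ((k : ℝ) + 1)) atTop (𝓝 a) := by
    simpa using tendsto_const_nhds.sub (tendsto_one_div_add_atTop_nhds_zero_nat (𝕜 := ℝ))
  exact tendsto_nhdsWithin_iff.2 ⟨tendsto_of_tendsto_of_tendsto_of_le_of_le hlow
    tendsto_const_nhds hge hle, Eventually.of_forall hle⟩

theorem aemeasurable_restrict_of_continuousWithinAt_Iic {β : Type*} [TopologicalSpace β]
    [TopologicalSpace.PseudoMetrizableSpace β] [MeasurableSpace β] [BorelSpace β] {f : ℝ → β}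
    {s : Set ℝ}
    (hs : MeasurableSet s) (μ : Measure ℝ) (hf : ∀ a ∈ s, ContinuousWithinAt f (Iic a) a) :
    AEMeasurable f (μ.restrict s) := by
  refine aemeasurable_of_tendsto_metrizable_ae atTop
    (f := fun (k : ℕ) a => f ((⌊a * ((k : ℝ) + 1)⌋ : ℝ) / ((k : ℝ) + 1))) (fun k => ?_) ?_
  · exact ((measurable_of_countable fun j : ℤ => f ((j : ℝ) / ((k : ℝ) + 1))).comp
      (Int.measurable_floor.comp (measurable_id.mul_const _))).aemeasurable
  · filter_upwards [ae_restrict_mem hs] with a ha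
    exact (hf a ha).tendsto.comp (tendsto_floor_mul_div_nhdsLE a)

theorem exists_mem_Ioo_of_ae_restrict {P : ℝ → Prop} {s : Set ℝ}
    (hP : ∀ᵐ a ∂volume.restrict s, P a) {c d : ℝ} (hcd : c < d) (hs : Ioo c d ⊆ s) :
    ∃ b ∈ Ioo c d, P b := by
  have : (ae (volume.restrict (Ioo c d))).NeBot :=
    ae_neBot.2 (by simp [Measure.restrict_eq_zero, hcd])
  exact ((ae_restrict_mem measurableSet_Ioo).and
    (ae_restrict_of_ae_restrict_of_subset hs hP)).exists

section Fuzzy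

variable {m : ℕ} {p : ℝ}

theorem mem_kern_biInter {ι : Type*} {S : Set ι} {K : ι → Set (Em m)} {x : Em m}
    (h : ∀ i ∈ S, x ∈ kern (K i)) : x ∈ kern (⋂ i ∈ S, K i) :=
  ⟨mem_iInter₂.2 fun i hi => (h i hi).1, fun y hy =>
    subset_iInter₂ fun i hi => (h i hi).2 y (mem_iInter₂.1 hy i hi)⟩

theorem mem_kern_of_tendsto_hausdorffDist {K : Set (Em m)} (hK : IsClosed K)
    {C : ℕ → Set (Em m)} (hfin : ∀ n, hausdorffEDist (C n) K ≠ ⊤)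
    (hC : Tendsto (fun n => hausdorffDist (C n) K) atTop (𝓝 0))
    {y : ℕ → Em m} (hy : ∀ n, y n ∈ kern (C n)) {x : Em m} (hx : Tendsto y atTop (𝓝 x)) :
    x ∈ kern K := by
  refine ⟨mem_of_tendsto_of_tendsto_hausdorffDist_s15 hK hfin hC (fun n => (hy n).1) hx,
    fun y' hy' z hz => ?_⟩
  obtain ⟨w, hwC, hw⟩ := exists_tendsto_of_tendsto_hausdorffDist_s15 hfin hC hy'
  obtain ⟨s, t, hs, ht, hst, rfl⟩ := hz
  exact mem_of_tendsto_of_tendsto_hausdorffDist_s15 hK hfin hC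
    (fun n => (hy n).2 (w n) (hwC n) ⟨s, t, hs, ht, hst, rfl⟩)
    ((hx.const_smul s).add (hw.const_smul t))

theorem mem_fker {w : Em m → ℝ} {x : Em m} :
    x ∈ fker w ↔ ∀ a ∈ Ioc (0 : ℝ) 1, x ∈ kern (acut w a) := mem_iInter₂

theorem antitone_acut (w : Em m → ℝ) : Antitone (acut w) :=
  fun _ _ hab _ hx => le_trans hab hx

theorem isClosed_acut {w : Em m → ℝ} (hw : UpperSemicontinuous w) (a : ℝ) :
    IsClosed (acut w a) :=
  hw.isClosed_preimage a

theorem biInter_acut_eq (w : Em m → ℝ) {S : Set ℝ} {a : ℝ} (hSa : S ⊆ Iic a)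
    (hS : ∀ c < a, ∃ b ∈ S, c < b) : ⋂ b ∈ S, acut w b = acut w a := by
  refine Subset.antisymm (fun x hx => show a ≤ w x from le_of_forall_lt fun c hc => ?_)
    (subset_iInter₂ fun b hb => antitone_acut w (hSa hb))
  obtain ⟨b, hbS, hcb⟩ := hS c hc
  exact hcb.trans_le (mem_iInter₂.1 hx b hbS)

namespace IsFuzzyBp

variable {w w' : Em m → ℝ}

theorem acut_nonempty (hw : IsFuzzyBp p w) {a : ℝ} (ha : a ∈ Ioc (0 : ℝ) 1) :
    (acut w a).Nonempty :=
  let ⟨x, hx⟩ := hw.normal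
  ⟨x, show a ≤ w x from hx ▸ ha.2⟩

theorem hausdorffEDist_acut_ne_top {q : ℝ} (hw : IsFuzzyBp p w) (hw' : IsFuzzyBp q w')
    {a b : ℝ} (ha : a ∈ Ioc (0 : ℝ) 1) (hb : b ∈ Ioc (0 : ℝ) 1) :
    hausdorffEDist (acut w a) (acut w' b) ≠ ⊤ :=
  hausdorffEDist_ne_top_of_nonempty_of_bounded (hw.acut_nonempty ha) (hw'.acut_nonempty hb)
    (hw.compactCuts a ha).isBounded (hw'.compactCuts b hb).isBounded

theorem tendsto_hausdorffDist_acut_nhdsLT (hw : IsFuzzyBp p w) {a : ℝ}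
    (ha : a ∈ Ioc (0 : ℝ) 1) :
    Tendsto (fun b => hausdorffDist (acut w b) (acut w a)) (𝓝[<] a) (𝓝 0) :=
  tendsto_hausdorffDist_nhdsLT_of_antitone (antitone_acut w) (isClosed_acut hw.usc)
    (half_lt_self ha.1) (hw.compactCuts _ ⟨half_pos ha.1, (half_le_self ha.1.le).trans ha.2⟩)
    (biInter_acut_eq w Iio_subset_Iic_self fun _ hc =>
      let ⟨b, hcb, hba⟩ := exists_between hc; ⟨b, hba, hcb⟩).le

theorem continuousWithinAt_hausdorffDist_acut {q : ℝ} (hw : IsFuzzyBp p w)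
    (hw' : IsFuzzyBp q w') {a : ℝ} (ha : a ∈ Ioc (0 : ℝ) 1) :
    ContinuousWithinAt (fun b => hausdorffDist (acut w b) (acut w' b)) (Iic a) a := by
  refine continuousWithinAt_Iio_iff_Iic.1 (tendsto_iff_dist_tendsto_zero.2 ?_)
  have hsum := (hw.tendsto_hausdorffDist_acut_nhdsLT ha).add
    (hw'.tendsto_hausdorffDist_acut_nhdsLT ha)
  rw [add_zero] at hsum
  refine squeeze_zero' (Eventually.of_forall fun _ => dist_nonneg) ?_ hsum
  filter_upwards [Ioo_mem_nhdsLT ha.1] with b hb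
  have hbI : b ∈ Ioc (0 : ℝ) 1 := ⟨hb.1, hb.2.le.trans ha.2⟩
  exact abs_hausdorffDist_sub_hausdorffDist_le (hw.hausdorffEDist_acut_ne_top hw hbI ha)
    (hw'.hausdorffEDist_acut_ne_top hw' hbI ha)

theorem integrableOn_hausdorffDist_acut_rpow (hp : 0 ≤ p) (hw : IsFuzzyBp p w)
    (hw' : IsFuzzyBp p w') :
    IntegrableOn (fun a => hausdorffDist (acut w a) (acut w' a) ^ p) (Ioc (0 : ℝ) 1) := by
  have hmeas : AEMeasurable (fun a => hausdorffDist (acut w a) (acut w' a))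
      (volume.restrict (Ioc (0 : ℝ) 1)) :=
    aemeasurable_restrict_of_continuousWithinAt_Iic measurableSet_Ioc _
      fun a ha => hw.continuousWithinAt_hausdorffDist_acut hw' ha
  refine Integrable.mono' ((hw.lp.add hw'.lp).const_mul (2 ^ p))
    (hmeas.pow_const p).aestronglyMeasurable ?_
  filter_upwards [ae_restrict_mem measurableSet_Ioc] with a ha
  have hfin : hausdorffEDist (acut w a) ({0} : Set (Em m)) ≠ ⊤ :=
    hausdorffEDist_ne_top_of_nonempty_of_bounded (hw.acut_nonempty ha) (singleton_nonempty 0)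
      (hw.compactCuts a ha).isBounded Bornology.isBounded_singleton
  rw [Real.norm_of_nonneg (Real.rpow_nonneg hausdorffDist_nonneg p)]
  calc hausdorffDist (acut w a) (acut w' a) ^ p
      ≤ (hausdorffDist (acut w a) {0} + hausdorffDist (acut w' a) {0}) ^ p :=
        Real.rpow_le_rpow hausdorffDist_nonneg (by
          simpa only [hausdorffDist_comm (s := ({0} : Set (Em m)))] using
            hausdorffDist_triangle (u := acut w' a) hfin) hp
    _ ≤ _ := add_rpow_le_two_rpow_mul_add_rpow hausdorffDist_nonneg hausdorffDist_nonneg hp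

end IsFuzzyBp

end Fuzzy

section Convergence

variable {m : ℕ} {p : ℝ}

theorem dp_rpow (hp : p ≠ 0) (u v : Em m → ℝ) :
    dp p u v ^ p = ∫ a in Ioc (0 : ℝ) 1, hausdorffDist (acut u a) (acut v a) ^ p := by
  rw [dp, one_div, Real.rpow_inv_rpow _ hp]
  exact setIntegral_nonneg measurableSet_Ioc fun a _ => Real.rpow_nonneg hausdorffDist_nonneg p

theorem exists_strictMono_ae_tendsto_hausdorffDist_acut (hp : 0 < p)
    {u : ℕ → Em m → ℝ} {v : Em m → ℝ} (hu : ∀ n, IsFuzzyBp p (u n)) (hv : IsFuzzyBp p v)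
    (h : Tendsto (fun n => dp p (u n) v) atTop (𝓝 0)) :
    ∃ φ : ℕ → ℕ, StrictMono φ ∧ ∀ᵐ a ∂volume.restrict (Ioc (0 : ℝ) 1),
      Tendsto (fun j => hausdorffDist (acut (u (φ j)) a) (acut v a)) atTop (𝓝 0) := by
  set f : ℕ → ℝ → ℝ := fun n a => hausdorffDist (acut (u n) a) (acut v a) ^ p
  have hf : ∀ n, IntegrableOn (f n) (Ioc (0 : ℝ) 1) := fun n =>
    (hu n).integrableOn_hausdorffDist_acut_rpow hp.le hv
  have hf_nonneg : ∀ n a, 0 ≤ f n a := fun n a => Real.rpow_nonneg hausdorffDist_nonneg p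
  have hint : Tendsto (fun n => ∫ a in Ioc (0 : ℝ) 1, f n a) atTop (𝓝 0) := by
    simpa [dp_rpow hp.ne', Real.zero_rpow hp.ne'] using h.rpow_const (Or.inr hp.le)
  have hL1 : Tendsto (fun n => eLpNorm (f n - 0) 1 (volume.restrict (Ioc (0 : ℝ) 1)))
      atTop (𝓝 0) := by
    simp_rw [sub_zero, eLpNorm_one_eq_lintegral_enorm,
      ← ofReal_integral_norm_eq_lintegral_enorm (hf _),
      Real.norm_of_nonneg (hf_nonneg _ _)]
    simpa using ENNReal.tendsto_ofReal hint
  obtain ⟨φ, hφ, hae⟩ := (tendstoInMeasure_of_tendsto_eLpNorm one_ne_zero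
    (fun n => (hf n).aestronglyMeasurable) aestronglyMeasurable_zero hL1).exists_seq_tendsto_ae
  refine ⟨φ, hφ, hae.mono fun a ha => ?_⟩
  simpa [f, Real.rpow_rpow_inv hausdorffDist_nonneg hp.ne', Real.zero_rpow (inv_ne_zero hp.ne')]
    using ha.rpow_const (Or.inr (inv_nonneg.2 hp.le))

theorem mem_fker_of_ae_tendsto {u : ℕ → Em m → ℝ} {v : Em m → ℝ}
    (hu : ∀ n, IsFuzzyBp p (u n)) (hv : IsFuzzyBp p v)
    (hconv : ∀ᵐ a ∂volume.restrict (Ioc (0 : ℝ) 1),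
      Tendsto (fun n => hausdorffDist (acut (u n) a) (acut v a)) atTop (𝓝 0))
    {y : ℕ → Em m} (hy : ∀ n, y n ∈ fker (u n)) {x : Em m} (hx : Tendsto y atTop (𝓝 x)) :
    x ∈ fker v := by
  set S := {b | b ∈ Ioc (0 : ℝ) 1 ∧
    Tendsto (fun n => hausdorffDist (acut (u n) b) (acut v b)) atTop (𝓝 0)}
  have hS : ∀ b ∈ S, x ∈ kern (acut v b) := fun b hb =>
    mem_kern_of_tendsto_hausdorffDist (isClosed_acut hv.usc b)
      (fun n => (hu n).hausdorffEDist_acut_ne_top hv hb.1 hb.1) hb.2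
      (fun n => mem_fker.1 (hy n) b hb.1) hx
  refine mem_fker.2 fun a ha => ?_
  have hdense : ∀ c < a, ∃ b ∈ S ∩ Iio a, c < b := fun c hc => by
    have hI : Ioo (max c 0) a ⊆ Ioc (0 : ℝ) 1 := fun b hb =>
      ⟨(le_max_right c 0).trans_lt hb.1, hb.2.le.trans ha.2⟩
    obtain ⟨b, hb, hbconv⟩ := exists_mem_Ioo_of_ae_restrict hconv (max_lt hc ha.1) hI
    exact ⟨b, ⟨⟨hI hb, hbconv⟩, hb.2⟩, (le_max_left c 0).trans_lt hb.1⟩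
  rw [← biInter_acut_eq v (inter_subset_right.trans Iio_subset_Iic_self) hdense]
  exact mem_kern_biInter fun b hb => hS b hb.1

theorem exists_tendsto_of_mem_KLimsup {C : ℕ → Set (Em m)} {x : Em m} (hx : x ∈ KLimsup C) :
    ∃ k : ℕ → ℕ, Tendsto k atTop atTop ∧
      ∃ y : ℕ → Em m, (∀ j, y j ∈ C (k j)) ∧ Tendsto y atTop (𝓝 x) := by
  have : ∀ j : ℕ, ∃ k, j ≤ k ∧ ∃ z ∈ C k, dist z x < 1 / (j + 1) := fun j => by
    obtain ⟨z, hz, hzx⟩ :=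
      Metric.mem_closure_iff.1 (mem_iInter.1 hx j) _ Nat.one_div_pos_of_nat
    simp only [mem_iUnion] at hz
    obtain ⟨k, hjk, hzk⟩ := hz
    exact ⟨k, hjk, z, hzk, by rwa [dist_comm]⟩
  choose k hk y hy hyx using this
  exact ⟨k, tendsto_atTop_mono hk tendsto_id, y, hy, tendsto_iff_dist_tendsto_zero.2 <|
    squeeze_zero (fun _ => dist_nonneg) (fun j => (hyx j).le)
      tendsto_one_div_add_atTop_nhds_zero_nat⟩

end Convergence

theorem star_shaped_numbers_closed_general {m : ℕ} (p : ℝ) (hp : 1 ≤ p)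
    (u : ℕ → Em m → ℝ) (v : Em m → ℝ)
    (hu : ∀ n, IsFuzzyBp p (u n))
    (huk : ∀ n, (fker (u n)).Nonempty)
    (hv : IsFuzzyBp p v)
    (h : Tendsto (fun n => dp p (u n) v) atTop (nhds 0)) :
    (fker v).Nonempty ∧ KLimsup (fun n => fker (u n)) ⊆ fker v := by
  have hp₀ : 0 < p := zero_lt_one.trans_le hp
  have hsub : KLimsup (fun n => fker (u n)) ⊆ fker v := fun x hx => by
    obtain ⟨k, hk, y, hy, hyx⟩ := exists_tendsto_of_mem_KLimsup hx
    obtain ⟨φ, hφ, hconv⟩ :=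
      exists_strictMono_ae_tendsto_hausdorffDist_acut hp₀ (fun n => hu (k n)) hv (h.comp hk)
    exact mem_fker_of_ae_tendsto (fun j => hu _) hv hconv (fun j => hy (φ j))
      (hyx.comp hφ.tendsto_atTop)
  refine ⟨?_, hsub⟩
  choose y hy using huk
  obtain ⟨φ, -, hconv⟩ := exists_strictMono_ae_tendsto_hausdorffDist_acut hp₀ hu hv h
  obtain ⟨b, hb, hbconv⟩ := exists_mem_Ioo_of_ae_restrict hconv zero_lt_one Ioo_subset_Ioc_self
  have hbI : b ∈ Ioc (0 : ℝ) 1 := Ioo_subset_Ioc_self hb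
  have hnear : ∃ᶠ j in atTop, y (φ j) ∈ cthickening 1 (acut v b) :=
    ((hbconv.eventually (gt_mem_nhds zero_lt_one)).mono fun j hj =>
      mem_cthickening_of_hausdorffDist_le (mem_fker.1 (hy (φ j)) b hbI).1
        ((hu _).hausdorffEDist_acut_ne_top hv hbI hbI) hj.le).frequently
  obtain ⟨x, -, ψ, hψ, hx⟩ := (hv.compactCuts b hbI).cthickening.tendsto_subseq' hnear
  exact ⟨x, mem_fker_of_ae_tendsto (fun j => hu _) hv
    (hconv.mono fun a ha => ha.comp hψ.tendsto_atTop) (fun j => hy _) hx⟩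

/-- `S^{m,p}` is closed in `(S̃^{m,p}, d_p)`: if `u n ∈ S^{m,p}`
converge in `d_p` to `v ∈ S̃^{m,p}`, then `v ∈ S^{m,p}` and the Kuratowski upper
limit of the kernels is contained in `ker v`. -/
theorem star_shaped_numbers_closed {m : ℕ} (p : ℝ) (hp : 1 ≤ p)
    (u : ℕ → Em m → ℝ) (v : Em m → ℝ)
    (hu : ∀ n, IsFuzzyBp p (u n))
    (hus : ∀ n, ∀ a ∈ Ioc (0:ℝ) 1, StarShaped (acut (u n) a))
    (huk : ∀ n, (fker (u n)).Nonempty)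
    (hv : IsFuzzyBp p v)
    (hvs : ∀ a ∈ Ioc (0:ℝ) 1, StarShaped (acut v a))
    (h : Tendsto (fun n => dp p (u n) v) atTop (nhds 0)) :
    (fker v).Nonempty ∧ KLimsup (fun n => fker (u n)) ⊆ fker v :=
  star_shaped_numbers_closed_general p hp u v hu huk hv h
end
end
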